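/- arXiv:1511.08966 — 4 statements merged into one kernel-verified Lean document; each statement's English description precedes it below -/
import Mathlib

section
/- Let K be a commutative ring, Γ a group, K[Γ] its group algebra, and I the augmentation ideal (the kernel of the augmentation map K[Γ] → K). Then the map I/I² → Γ^ab ⊗_ℤ K sending the class of (γ − 1) to [γ] ⊗ 1 is a well-defined isomorphism of K-modules, where Γ^ab = Γ/[Γ,Γ]. -/
open TensorProduct

namespace Stmt0Aux

variable (K : Type) [CommRing K] (Γ : Type) [Group Γ]

abbrev T := Additive (Abelianization Γ) ⊗[ℤ] K

def gen (γ : Γ) : Additive (Abelianization Γ) := Additive.ofMul (Abelianization.of γ)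

noncomputable def φ : MonoidAlgebra K Γ →+ T K Γ :=
  (Finsupp.liftAddHom fun γ =>
    ((TensorProduct.mk ℤ (Additive (Abelianization Γ)) K) (gen Γ γ)).toAddMonoidHom).comp
    MonoidAlgebra.coeffAddEquiv.toAddMonoidHom

@[simp] lemma φ_single (γ : Γ) (k : K) :
    φ K Γ (MonoidAlgebra.single γ k) = gen Γ γ ⊗ₜ[ℤ] k := by
  rw [φ]; exact Finsupp.liftAddHom_apply_single _ _ _

noncomputable def ε : MonoidAlgebra K Γ →ₐ[K] K := MonoidAlgebra.lift K K Γ 1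

lemma ε_apply (f : MonoidAlgebra K Γ) : ε K Γ f = f.coeff.sum fun _ b => b := by
  simp [ε, MonoidAlgebra.lift_apply]

noncomputable def Iaug : Submodule K (MonoidAlgebra K Γ) :=
  Submodule.restrictScalars K
    (RingHom.ker (MonoidAlgebra.lift K K Γ 1 : MonoidAlgebra K Γ →ₐ[K] K))

noncomputable def Naug : Submodule K (Iaug K Γ) :=
  Submodule.comap (Iaug K Γ).subtype (Iaug K Γ * Iaug K Γ)

lemma mem_Iaug_iff (f : MonoidAlgebra K Γ) : f ∈ Iaug K Γ ↔ ε K Γ f = 0 := Iff.rfl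

lemma gen_mul (a b : Γ) : gen Γ (a * b) = gen Γ a + gen Γ b := by
  simp [gen]

lemma sum_tmul_left (p : MonoidAlgebra K Γ) (c : Additive (Abelianization Γ)) (t : K) :
    (p.coeff.sum fun _ b => c ⊗ₜ[ℤ] (b * t)) = c ⊗ₜ[ℤ] (ε K Γ p * t) := by
  rw [ε_apply, Finsupp.sum, Finsupp.sum, Finset.sum_mul, tmul_sum]

lemma sum_tmul_right (p : MonoidAlgebra K Γ) (c : Additive (Abelianization Γ)) (t : K) :
    (p.coeff.sum fun _ b => c ⊗ₜ[ℤ] (t * b)) = c ⊗ₜ[ℤ] (t * ε K Γ p) := by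
  rw [ε_apply, Finsupp.sum, Finsupp.sum, Finset.mul_sum, tmul_sum]

lemma φ_mul_eq_zero (f g : MonoidAlgebra K Γ) (hf : ε K Γ f = 0) (hg : ε K Γ g = 0) :
    φ K Γ (f * g) = 0 := by
  rw [MonoidAlgebra.mul_def]
  simp only [map_finsuppSum, φ_single]
  simp_rw [gen_mul, add_tmul, Finsupp.sum_add]
  have h1 : (f.coeff.sum fun a₁ b₁ => g.coeff.sum fun _ b₂ => gen Γ a₁ ⊗ₜ[ℤ] (b₁ * b₂)) = 0 := by
    simp_rw [sum_tmul_right, hg, mul_zero, tmul_zero, Finsupp.sum, Finset.sum_const_zero]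
  have h2 : (f.coeff.sum fun _ b₁ => g.coeff.sum fun a₂ b₂ => gen Γ a₂ ⊗ₜ[ℤ] (b₁ * b₂)) = 0 := by
    rw [Finsupp.sum_comm]
    simp_rw [sum_tmul_left, hf, zero_mul, tmul_zero, Finsupp.sum, Finset.sum_const_zero]
  rw [h1, h2, add_zero]

lemma φ_vanish_N (x : Iaug K Γ) (hx : x ∈ Naug K Γ) : φ K Γ x.val = 0 := by
  have hx' : (x : MonoidAlgebra K Γ) ∈ Iaug K Γ * Iaug K Γ := hx
  refine Submodule.mul_induction_on hx' ?_ ?_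
  · intro a ha b hb
    exact φ_mul_eq_zero K Γ a b ha hb
  · intro a b ha hb
    simp [map_add, ha, hb]

noncomputable def F : ((Iaug K Γ) ⧸ (Naug K Γ)) →+ T K Γ :=
  QuotientAddGroup.lift (Naug K Γ).toAddSubgroup
    ((φ K Γ).comp (Iaug K Γ).subtype.toAddMonoidHom)
    (fun x hx => φ_vanish_N K Γ x hx)

@[simp] lemma F_mk (x : Iaug K Γ) :
    F K Γ (Submodule.Quotient.mk x) = φ K Γ x.val := rfl


lemma of_sub_one_mem (γ : Γ) : MonoidAlgebra.of K Γ γ - 1 ∈ Iaug K Γ := by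
  have : ε K Γ (MonoidAlgebra.of K Γ γ - 1) = 0 := by
    simp [ε]
  exact this

noncomputable def elt (γ : Γ) : Iaug K Γ := ⟨MonoidAlgebra.of K Γ γ - 1, of_sub_one_mem K Γ γ⟩

noncomputable def ψ (γ : Γ) : K →+ ((Iaug K Γ) ⧸ (Naug K Γ)) where
  toFun k := Submodule.Quotient.mk (k • elt K Γ γ)
  map_zero' := by simp
  map_add' := fun a b => by
    show Submodule.Quotient.mk ((a + b) • elt K Γ γ) = _
    rw [add_smul, Submodule.Quotient.mk_add]

lemma ψ_mul (γ δ : Γ) : ψ K Γ (γ * δ) = ψ K Γ γ + ψ K Γ δ := by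
  ext k
  rw [AddMonoidHom.add_apply]
  show Submodule.Quotient.mk (k • elt K Γ (γ * δ)) =
    Submodule.Quotient.mk (k • elt K Γ γ) + Submodule.Quotient.mk (k • elt K Γ δ)
  rw [← Submodule.Quotient.mk_add, Submodule.Quotient.eq]
  have hmem : ((k • elt K Γ (γ * δ) - (k • elt K Γ γ + k • elt K Γ δ) : Iaug K Γ) :
      MonoidAlgebra K Γ) ∈ Iaug K Γ * Iaug K Γ := by
    have hval : ((k • elt K Γ (γ * δ) - (k • elt K Γ γ + k • elt K Γ δ) : Iaug K Γ) :
        MonoidAlgebra K Γ) =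
        k • ((MonoidAlgebra.of K Γ γ - 1) * (MonoidAlgebra.of K Γ δ - 1)) := by
      show k • (MonoidAlgebra.of K Γ (γ * δ) - 1) -
        (k • (MonoidAlgebra.of K Γ γ - 1) + k • (MonoidAlgebra.of K Γ δ - 1)) = _
      rw [map_mul, ← smul_add, ← smul_sub]
      congr 1
      noncomm_ring
    rw [hval]
    exact Submodule.smul_mem _ k
      (Submodule.mul_mem_mul (of_sub_one_mem K Γ γ) (of_sub_one_mem K Γ δ))
  exact hmem

noncomputable def Ψ : Additive (Abelianization Γ) →+ (K →+ ((Iaug K Γ) ⧸ (Naug K Γ))) :=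
  MonoidHom.toAdditiveLeft
    (Abelianization.lift (MonoidHom.mk' (fun γ => Multiplicative.ofAdd (ψ K Γ γ))
      (fun γ δ => by
        show Multiplicative.ofAdd (ψ K Γ (γ * δ)) = _
        rw [ψ_mul]; rfl)))

lemma Ψ_gen (γ : Γ) (k : K) : Ψ K Γ (gen Γ γ) k = Submodule.Quotient.mk (k • elt K Γ γ) := by
  have : Ψ K Γ (gen Γ γ) = ψ K Γ γ := by
    simp [Ψ, gen, Abelianization.lift_apply_of]
  rw [this]; rfl

noncomputable def G : T K Γ →+ ((Iaug K Γ) ⧸ (Naug K Γ)) :=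
  TensorProduct.liftAddHom (Ψ K Γ) (fun n m k => by
    rw [map_zsmul, AddMonoidHom.smul_apply]
    exact (map_zsmul (Ψ K Γ m) n k).symm)

lemma G_tmul (m : Additive (Abelianization Γ)) (k : K) : G K Γ (m ⊗ₜ[ℤ] k) = Ψ K Γ m k := rfl


lemma φ_apply (f : MonoidAlgebra K Γ) :
    φ K Γ f = f.coeff.sum fun γ k => gen Γ γ ⊗ₜ[ℤ] k :=
  Finsupp.liftAddHom_apply _ _

lemma sum_smul_of_sub_one (f : MonoidAlgebra K Γ) (hf : ε K Γ f = 0) :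
    (f.coeff.sum fun γ k => k • (MonoidAlgebra.of K Γ γ - 1)) = f := by
  have hsplit : (f.coeff.sum fun γ k => k • (MonoidAlgebra.of K Γ γ - 1)) =
      (f.coeff.sum fun γ k => MonoidAlgebra.single γ k) -
        (f.coeff.sum fun _ k => k • (1 : MonoidAlgebra K Γ)) := by
    simp only [Finsupp.sum, ← Finset.sum_sub_distrib]
    refine Finset.sum_congr rfl fun γ _ => ?_
    rw [smul_sub, MonoidAlgebra.smul_of]
  rw [hsplit]
  have h2 : (f.coeff.sum fun _ k => k • (1 : MonoidAlgebra K Γ)) = ε K Γ f • 1 := by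
    rw [ε_apply]
    simp only [Finsupp.sum]
    rw [Finset.sum_smul]
  rw [h2, hf, zero_smul, sub_zero]
  exact MonoidAlgebra.sum_coeff_single f

lemma sum_smul_elt (x : Iaug K Γ) :
    ((x : MonoidAlgebra K Γ).coeff.sum fun γ k => k • elt K Γ γ) = x := by
  apply Subtype.ext
  have hcoe : (((x : MonoidAlgebra K Γ).coeff.sum fun γ k => k • elt K Γ γ : Iaug K Γ) :
      MonoidAlgebra K Γ) =
      (x : MonoidAlgebra K Γ).coeff.sum fun γ k => k • (MonoidAlgebra.of K Γ γ - 1) := by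
    simp only [Finsupp.sum, AddSubmonoidClass.coe_finset_sum, SetLike.val_smul, elt]
  rw [hcoe]
  exact sum_smul_of_sub_one K Γ _ x.2

lemma left_inv' (z : (Iaug K Γ) ⧸ (Naug K Γ)) : G K Γ (F K Γ z) = z := by
  obtain ⟨x, rfl⟩ := Submodule.Quotient.mk_surjective _ z
  rw [F_mk, φ_apply, map_finsuppSum]
  simp only [G_tmul, Ψ_gen]
  simp_rw [← Submodule.mkQ_apply]
  rw [← map_finsuppSum, sum_smul_elt]

lemma gen_one : gen Γ (1 : Γ) = 0 := by simp [gen]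

lemma φ_smul_of_sub_one (γ : Γ) (k : K) :
    φ K Γ (k • (MonoidAlgebra.of K Γ γ - 1)) = gen Γ γ ⊗ₜ[ℤ] k := by
  rw [smul_sub, MonoidAlgebra.smul_of,
    show (1 : MonoidAlgebra K Γ) = MonoidAlgebra.of K Γ 1 from (map_one _).symm,
    MonoidAlgebra.smul_of, map_sub, φ_single, φ_single, gen_one, TensorProduct.zero_tmul,
    sub_zero]

lemma exists_gen (m : Additive (Abelianization Γ)) : ∃ γ : Γ, gen Γ γ = m := by
  have h : ∀ q : Abelianization Γ, ∃ γ : Γ, Abelianization.of γ = q := fun q =>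
    QuotientGroup.induction_on q fun γ => ⟨γ, rfl⟩
  obtain ⟨γ, hγ⟩ := h (Additive.toMul m)
  exact ⟨γ, congrArg Additive.ofMul hγ⟩

lemma right_inv' (t : T K Γ) : F K Γ (G K Γ t) = t := by
  induction t using TensorProduct.induction_on with
  | zero => simp
  | add a b ha hb => rw [map_add, map_add, ha, hb]
  | tmul m k =>
    obtain ⟨γ, rfl⟩ := exists_gen Γ m
    rw [G_tmul, Ψ_gen, F_mk]
    show φ K Γ (k • (MonoidAlgebra.of K Γ γ - 1)) = _
    rw [φ_smul_of_sub_one]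

lemma φ_smul (k : K) (f : MonoidAlgebra K Γ) :
    φ K Γ (k • f) = LinearMap.lTensor (Additive (Abelianization Γ))
      (k • (LinearMap.id : K →ₗ[ℤ] K)) (φ K Γ f) := by
  induction f using MonoidAlgebra.induction_linear with
  | zero => simp
  | add f g hf hg => simp [smul_add, map_add, hf, hg]
  | single γ c =>
    rw [MonoidAlgebra.smul_single]
    rw [φ_single, φ_single, LinearMap.lTensor_tmul]
    rw [LinearMap.smul_apply, LinearMap.id_apply]

noncomputable def e : ((Iaug K Γ) ⧸ (Naug K Γ)) ≃+ T K Γ where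
  toFun := F K Γ
  invFun := G K Γ
  left_inv := left_inv' K Γ
  right_inv := right_inv' K Γ
  map_add' := (F K Γ).map_add

lemma e_apply (z : (Iaug K Γ) ⧸ (Naug K Γ)) : e K Γ z = F K Γ z := rfl

lemma e_smul (k : K) (x : (Iaug K Γ) ⧸ (Naug K Γ)) :
    e K Γ (k • x) = LinearMap.lTensor (Additive (Abelianization Γ))
      (k • (LinearMap.id : K →ₗ[ℤ] K)) (e K Γ x) := by
  obtain ⟨v, rfl⟩ := Submodule.Quotient.mk_surjective _ x
  rw [e_apply, e_apply, ← Submodule.Quotient.mk_smul, F_mk, F_mk]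
  show φ K Γ (k • (v : MonoidAlgebra K Γ)) = _
  rw [φ_smul]

lemma e_elt (γ : Γ) : e K Γ (Submodule.Quotient.mk (elt K Γ γ)) =
    gen Γ γ ⊗ₜ[ℤ] (1 : K) := by
  rw [e_apply, F_mk]
  show φ K Γ (MonoidAlgebra.of K Γ γ - 1) = _
  rw [← one_smul K (MonoidAlgebra.of K Γ γ - 1), φ_smul_of_sub_one]

end Stmt0Aux

/-- Let `K` be a commutative ring, `Γ` a group, `K[Γ]` its group algebra and `I` the
augmentation ideal.  The map `I/I² → Γ^ab ⊗_ℤ K` sending the class of `γ - 1` to `[γ] ⊗ 1`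
is a well-defined isomorphism of `K`-modules (an additive isomorphism commuting with the
`K`-actions, the `K`-action on `Γ^ab ⊗_ℤ K` being on the second tensor factor). -/
theorem stmt_0 (K : Type) [CommRing K] (Γ : Type) [Group Γ]
    (I : Submodule K (MonoidAlgebra K Γ))
    (hI : I = Submodule.restrictScalars K
      (RingHom.ker (MonoidAlgebra.lift K K Γ 1 : MonoidAlgebra K Γ →ₐ[K] K)))
    (N : Submodule K I)
    (hN : N = Submodule.comap I.subtype (I * I)) :
    ∃ e : ((↥I) ⧸ N) ≃+ (Additive (Abelianization Γ) ⊗[ℤ] K),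
      (∀ (k : K) (x : (↥I) ⧸ N),
        e (k • x) = LinearMap.lTensor (Additive (Abelianization Γ))
          (k • (LinearMap.id : K →ₗ[ℤ] K)) (e x)) ∧
      (∀ (γ : Γ) (h : MonoidAlgebra.of K Γ γ - 1 ∈ I),
        e (Submodule.Quotient.mk ⟨MonoidAlgebra.of K Γ γ - 1, h⟩) =
          Additive.ofMul (Abelianization.of γ) ⊗ₜ[ℤ] (1 : K)) := by
  subst hI
  subst hN
  exact ⟨Stmt0Aux.e K Γ, Stmt0Aux.e_smul K Γ, fun γ h => Stmt0Aux.e_elt K Γ γ⟩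
end

section
/- Let Γ be a free group on a set S and I the augmentation ideal of ℤ[Γ]. Then I is a free left ℤ[Γ]-module with basis {x − 1 : x ∈ S}. -/
noncomputable section Fox

open MonoidAlgebra TrivSqZeroExt

variable (S : Type)

abbrev FR := MonoidAlgebra ℤ (FreeGroup S)

def eps : FR S →ₐ[ℤ] ℤ := MonoidAlgebra.lift ℤ ℤ (FreeGroup S) 1

@[simp] lemma eps_of (g : FreeGroup S) :
    eps S (MonoidAlgebra.of ℤ (FreeGroup S) g) = 1 := by
  simp [eps]

def FoxM := S →₀ FR S

instance : AddCommGroup (FoxM S) := inferInstanceAs (AddCommGroup (S →₀ FR S))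
instance : Module (FR S) (FoxM S) := inferInstanceAs (Module (FR S) (S →₀ FR S))
instance : Module ℤ (FoxM S) := inferInstanceAs (Module ℤ (S →₀ FR S))
instance : IsScalarTower ℤ (FR S) (FoxM S) :=
  inferInstanceAs (IsScalarTower ℤ (FR S) (S →₀ FR S))

instance : Module (FR S)ᵐᵒᵖ (FoxM S) :=
  Module.compHom (S →₀ FR S)
    (((eps S).fromOpposite (fun _ _ => mul_comm _ _)).toRingHom)

lemma op_smul (r : FR S) (m : FoxM S) :
    (MulOpposite.op r) • m = (eps S r) • m := rfl

instance : SMulCommClass (FR S) (FR S)ᵐᵒᵖ (FoxM S) :=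
  ⟨fun r r' m => by
    show r • ((eps S r'.unop) • m) = (eps S r'.unop) • (r • m)
    exact smul_comm _ _ _⟩

instance : IsScalarTower ℤ (FR S)ᵐᵒᵖ (FoxM S) :=
  ⟨fun z r m => by
    show (eps S (z • r).unop) • m = z • ((eps S r.unop) • m)
    rw [MulOpposite.unop_smul, map_zsmul, smul_assoc]⟩

lemma foxSmulSingle (r : FR S) (s : S) (x : FR S) :
    r • (Finsupp.single s x : FoxM S) = Finsupp.single s (r * x) := by
  show r • (Finsupp.single s x : S →₀ FR S) = _
  rw [Finsupp.smul_single, smul_eq_mul]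

def genUnit (s : S) : (TrivSqZeroExt (FR S) (FoxM S))ˣ where
  val := ⟨MonoidAlgebra.of ℤ (FreeGroup S) (FreeGroup.of s), Finsupp.single s 1⟩
  inv := ⟨MonoidAlgebra.of ℤ (FreeGroup S) ((FreeGroup.of s)⁻¹),
          -(Finsupp.single s (MonoidAlgebra.of ℤ (FreeGroup S) ((FreeGroup.of s)⁻¹)))⟩
  val_inv := by
    refine TrivSqZeroExt.ext ?_ ?_
    · show MonoidAlgebra.of ℤ (FreeGroup S) (FreeGroup.of s) *
        MonoidAlgebra.of ℤ (FreeGroup S) ((FreeGroup.of s)⁻¹) = 1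
      rw [← map_mul, mul_inv_cancel, map_one]
    · erw [snd_mul, snd_one]
      erw [fst_mk, fst_mk, snd_mk, snd_mk]
      erw [smul_neg, foxSmulSingle, ← map_mul, mul_inv_cancel, map_one, op_smul, eps_of, one_smul,
        neg_add_cancel]
  inv_val := by
    refine TrivSqZeroExt.ext ?_ ?_
    · show MonoidAlgebra.of ℤ (FreeGroup S) ((FreeGroup.of s)⁻¹) *
        MonoidAlgebra.of ℤ (FreeGroup S) (FreeGroup.of s) = 1
      rw [← map_mul, inv_mul_cancel, map_one]
    · erw [snd_mul, snd_one, fst_mk, fst_mk, snd_mk, snd_mk]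
      erw [foxSmulSingle, mul_one, op_smul, eps_of, one_smul, add_neg_cancel]

def uhom : FreeGroup S →* (TrivSqZeroExt (FR S) (FoxM S))ˣ := FreeGroup.lift (genUnit S)

def Psi : FR S →ₐ[ℤ] TrivSqZeroExt (FR S) (FoxM S) :=
  MonoidAlgebra.lift ℤ _ (FreeGroup S) ((Units.coeHom _).comp (uhom S))

@[simp] lemma Psi_of (g : FreeGroup S) :
    Psi S (MonoidAlgebra.of ℤ (FreeGroup S) g)
      = ((uhom S g : (TrivSqZeroExt (FR S) (FoxM S))ˣ) : TrivSqZeroExt (FR S) (FoxM S)) := by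
  simp [Psi]

lemma fst_u (g : FreeGroup S) :
    ((uhom S g : (TrivSqZeroExt (FR S) (FoxM S))ˣ) : TrivSqZeroExt (FR S) (FoxM S)).fst
      = MonoidAlgebra.of ℤ (FreeGroup S) g := by
  induction g with
  | C1 => simp [MonoidAlgebra.one_def]
  | of s =>
    rw [uhom, show (FreeGroup.lift (genUnit S)) (FreeGroup.of s) = genUnit S s from FreeGroup.lift_apply_of]
    rfl
  | inv_of s _ =>
    rw [map_inv, uhom,
      show (FreeGroup.lift (genUnit S)) (FreeGroup.of s) = genUnit S s from FreeGroup.lift_apply_of]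
    rfl
  | mul a b iha ihb => rw [map_mul, Units.val_mul, fst_mul, iha, ihb, ← map_mul]

lemma fst_Psi (a : FR S) : (Psi S a).fst = a := by
  have h : (fstHom ℤ (FR S) (FoxM S)).comp (Psi S) = AlgHom.id ℤ (FR S) := by
    apply MonoidAlgebra.algHom_ext
    intro g
    simp only [AlgHom.coe_comp, Function.comp_apply, AlgHom.coe_id, id_eq, fstHom_apply]
    rw [← MonoidAlgebra.of_apply, Psi_of, fst_u]
    exact Subsingleton.elim _ _
  exact DFunLike.congr_fun h a

def D : FR S →ₗ[ℤ] (S →₀ FR S) where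
  toFun a := (Psi S a).snd
  map_add' a b := by rw [map_add, snd_add]; rfl
  map_smul' z a := by rw [map_smul, snd_smul, RingHom.id_apply]; rfl

lemma D_mul (a b : FR S) : D S (a * b) = a • D S b + (eps S b) • D S a := by
  show (Psi S (a * b)).snd = _
  rw [map_mul, snd_mul, fst_Psi, fst_Psi, op_smul]
  rfl

@[simp] lemma D_gen (s : S) :
    D S (MonoidAlgebra.of ℤ (FreeGroup S) (FreeGroup.of s)) = Finsupp.single s 1 := by
  show (Psi S _).snd = _
  rw [Psi_of, uhom, FreeGroup.lift_apply_of]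
  rfl

section Fox2
variable (S : Type)

@[simp] lemma D_one : D S (1 : FR S) = 0 := by
  show (Psi S 1).snd = 0
  rw [map_one, snd_one]

lemma D_gen_inv (s : S) :
    D S (MonoidAlgebra.of ℤ (FreeGroup S) ((FreeGroup.of s)⁻¹))
      = -(Finsupp.single s (MonoidAlgebra.of ℤ (FreeGroup S) ((FreeGroup.of s)⁻¹))) := by
  show (Psi S _).snd = _
  rw [Psi_of, map_inv, uhom,
    show (FreeGroup.lift (genUnit S)) (FreeGroup.of s) = genUnit S s from FreeGroup.lift_apply_of]
  rfl

def Tmap : (S →₀ FR S) →ₗ[FR S] FR S :=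
  Finsupp.linearCombination (FR S)
    (fun s => MonoidAlgebra.of ℤ (FreeGroup S) (FreeGroup.of s) - 1)

lemma Tmap_single (s : S) (a : FR S) :
    Tmap S (Finsupp.single s a)
      = a * (MonoidAlgebra.of ℤ (FreeGroup S) (FreeGroup.of s) - 1) := by
  rw [Tmap, Finsupp.linearCombination_single, smul_eq_mul]

lemma fund_of (g : FreeGroup S) :
    Tmap S (D S (MonoidAlgebra.of ℤ (FreeGroup S) g))
      = MonoidAlgebra.of ℤ (FreeGroup S) g - 1 := by
  induction g with
  | C1 => rw [map_one, D_one, map_zero, sub_self]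
  | of s =>
    show Tmap S (D S (MonoidAlgebra.of ℤ (FreeGroup S) (FreeGroup.of s)))
      = MonoidAlgebra.of ℤ (FreeGroup S) (FreeGroup.of s) - 1
    rw [D_gen, Tmap_single, one_mul]
  | inv_of s _ =>
    show Tmap S (D S (MonoidAlgebra.of ℤ (FreeGroup S) ((FreeGroup.of s)⁻¹)))
      = MonoidAlgebra.of ℤ (FreeGroup S) ((FreeGroup.of s)⁻¹) - 1
    rw [D_gen_inv, map_neg, Tmap_single, mul_sub, mul_one, ← map_mul, inv_mul_cancel, map_one,
      neg_sub]
  | mul a b iha ihb =>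
    rw [map_mul, D_mul, map_add, LinearMap.map_smul, smul_eq_mul, eps_of, one_smul, iha, ihb,
      mul_sub, mul_one, ← map_mul, sub_add_sub_cancel]

lemma fund (a : FR S) : Tmap S (D S a) = a - (eps S a) • (1 : FR S) := by
  induction a using MonoidAlgebra.induction_linear with
  | zero => rw [map_zero, map_zero, map_zero, zero_smul, sub_zero]
  | add f g hf hg => rw [map_add, map_add, hf, hg, map_add, add_smul, sub_add_sub_comm]
  | single g z =>
    have h1 : (MonoidAlgebra.single g z : FR S)
        = z • MonoidAlgebra.of ℤ (FreeGroup S) g := by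
      rw [MonoidAlgebra.of_apply, MonoidAlgebra.smul_single, smul_eq_mul, mul_one]
    rw [h1, map_zsmul, map_zsmul, fund_of, map_zsmul, eps_of, smul_sub, smul_eq_mul, mul_one]
lemma eps_Tmap (f : S →₀ FR S) : eps S (Tmap S f) = 0 := by
  induction f using Finsupp.induction_linear with
  | zero => rw [map_zero, map_zero]
  | add f g hf hg => rw [map_add, map_add, hf, hg, add_zero]
  | single s a =>
    rw [Tmap_single, map_mul, map_sub, eps_of, map_one, sub_self, mul_zero]

lemma fund2 (f : S →₀ FR S) : D S (Tmap S f) = f := by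
  induction f using Finsupp.induction_linear with
  | zero => rw [map_zero, map_zero]
  | add f g hf hg => rw [map_add, map_add, hf, hg]
  | single s a =>
    rw [Tmap_single, mul_sub, mul_one, map_sub, D_mul, D_gen, eps_of, one_smul, foxSmulSingle,
      mul_one, add_sub_cancel_right]

end Fox2

/-- Let `Γ` be the free group on a set `S` and `I` the augmentation ideal of `ℤ[Γ]`.
Then `I` is a free left `ℤ[Γ]`-module with basis `{x − 1 : x ∈ S}`. -/
theorem stmt_2 (S : Type)
    (I : Ideal (MonoidAlgebra ℤ (FreeGroup S)))
    (hI : I = RingHom.ker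
      (MonoidAlgebra.lift ℤ ℤ (FreeGroup S) 1 : MonoidAlgebra ℤ (FreeGroup S) →ₐ[ℤ] ℤ)) :
    ∃ b : Module.Basis S (MonoidAlgebra ℤ (FreeGroup S)) I,
      ∀ (s : S) (h : MonoidAlgebra.of ℤ (FreeGroup S) (FreeGroup.of s) - 1 ∈ I),
        b s = ⟨MonoidAlgebra.of ℤ (FreeGroup S) (FreeGroup.of s) - 1, h⟩ := by
  have hmem : ∀ f : S →₀ FR S, Tmap S f ∈ I := by
    intro f
    rw [hI, RingHom.mem_ker]
    exact eps_Tmap S f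
  have hzero : ∀ a : FR S, a ∈ I → eps S a = 0 := by
    intro a ha
    rw [hI, RingHom.mem_ker] at ha
    exact ha
  let T' : (S →₀ FR S) →ₗ[FR S] I := LinearMap.codRestrict I (Tmap S) hmem
  have hbij : Function.Bijective T' := by
    constructor
    · intro f g hfg
      have h1 : Tmap S f = Tmap S g := congrArg Subtype.val hfg
      have := congrArg (D S) h1
      rwa [fund2, fund2] at this
    · rintro ⟨a, ha⟩
      refine ⟨D S a, ?_⟩
      apply Subtype.ext
      show Tmap S (D S a) = a
      rw [fund, hzero a ha, zero_smul, sub_zero]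
  refine ⟨Module.Basis.ofRepr (LinearEquiv.ofBijective T' hbij).symm, ?_⟩
  intro s h
  have hb := Module.Basis.coe_ofRepr (LinearEquiv.ofBijective T' hbij).symm
  have : (Module.Basis.ofRepr (LinearEquiv.ofBijective T' hbij).symm) s
      = (LinearEquiv.ofBijective T' hbij) (Finsupp.single s 1) := by
    rw [hb]
    simp only [LinearEquiv.symm_symm]
  rw [this]
  apply Subtype.ext
  show Tmap S (Finsupp.single s 1) = MonoidAlgebra.of ℤ (FreeGroup S) (FreeGroup.of s) - 1
  rw [Tmap_single, one_mul]

end Fox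
end

section
/- Let Γ be a finitely generated free group, K a commutative ring, and I the augmentation ideal of K[Γ]. For every n ≥ 1, the map Iⁿ/Iⁿ⁺¹ → (I/I²)^⊗n (tensor product over K) sending the class of (γ₁ − 1)···(γₙ − 1) to [γ₁ − 1] ⊗ ⋯ ⊗ [γₙ − 1] is a well-defined isomorphism of K-modules. -/
open scoped TensorProduct

namespace FoxAux

variable (K : Type) [CommRing K] (m : ℕ)

abbrev A := MonoidAlgebra K (FreeGroup (Fin m))

noncomputable def eps : A K m →ₐ[K] K := MonoidAlgebra.lift K K (FreeGroup (Fin m)) 1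

noncomputable def E : A K m →ₐ[K] A K m := (Algebra.ofId K (A K m)).comp (eps K m)

noncomputable def X (j : Fin m) : A K m := MonoidAlgebra.of K (FreeGroup (Fin m)) (FreeGroup.of j)

@[simp] lemma eps_of (g : FreeGroup (Fin m)) :
    eps K m (MonoidAlgebra.of K (FreeGroup (Fin m)) g) = 1 := by
  show (MonoidAlgebra.lift K K (FreeGroup (Fin m))) 1 _ = 1
  rw [MonoidAlgebra.lift_of]; rfl

@[simp] lemma E_of (g : FreeGroup (Fin m)) :
    E K m (MonoidAlgebra.of K (FreeGroup (Fin m)) g) = 1 := by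
  show (Algebra.ofId K (A K m)) (eps K m _) = 1
  rw [eps_of]; simp; rfl

lemma E_comm (a b : A K m) : a * E K m b = E K m b * a := by
  show a * (Algebra.ofId K (A K m)) (eps K m b) = _
  rw [Algebra.ofId_apply, ← Algebra.commutes]; rfl

/-- The Fox ring: `A × A` with multiplication `(a,v)(b,w) = (ab, v·E(b) + a·w)`. -/
def R : Type := A K m × A K m

noncomputable instance : AddCommGroup (R K m) := inferInstanceAs (AddCommGroup (A K m × A K m))

def Rmk (a v : A K m) : R K m := (a, v)
def Rfst (x : R K m) : A K m := (show A K m × A K m from x).1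
def Rsnd (x : R K m) : A K m := (show A K m × A K m from x).2

lemma Rext (x y : R K m) (h1 : Rfst K m x = Rfst K m y) (h2 : Rsnd K m x = Rsnd K m y) :
    x = y := by
  obtain ⟨a, v⟩ := x; obtain ⟨b, w⟩ := y
  exact Prod.ext h1 h2

noncomputable instance : Mul (R K m) :=
  ⟨fun x y => Rmk K m (Rfst K m x * Rfst K m y)
      (Rsnd K m x * E K m (Rfst K m y) + Rfst K m x * Rsnd K m y)⟩

noncomputable instance : One (R K m) := ⟨Rmk K m 1 0⟩

@[simp] lemma Rfst_mul (x y : R K m) : Rfst K m (x * y) = Rfst K m x * Rfst K m y := rfl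
@[simp] lemma Rsnd_mul (x y : R K m) :
    Rsnd K m (x * y) = Rsnd K m x * E K m (Rfst K m y) + Rfst K m x * Rsnd K m y := rfl
@[simp] lemma Rfst_one : Rfst K m 1 = 1 := rfl
@[simp] lemma Rsnd_one : Rsnd K m 1 = 0 := rfl
@[simp] lemma Rfst_mk (a v : A K m) : Rfst K m (Rmk K m a v) = a := rfl
@[simp] lemma Rsnd_mk (a v : A K m) : Rsnd K m (Rmk K m a v) = v := rfl
@[simp] lemma Rfst_add (x y : R K m) : Rfst K m (x + y) = Rfst K m x + Rfst K m y := rfl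
@[simp] lemma Rsnd_add (x y : R K m) : Rsnd K m (x + y) = Rsnd K m x + Rsnd K m y := rfl
@[simp] lemma Rfst_zero : Rfst K m 0 = 0 := rfl
@[simp] lemma Rsnd_zero : Rsnd K m 0 = 0 := rfl

noncomputable instance : Ring (R K m) :=
  { (inferInstance : AddCommGroup (R K m)), (inferInstance : Mul (R K m)),
    (inferInstance : One (R K m)) with
    mul_assoc := fun x y z => by
      refine Rext K m _ _ ?_ ?_ <;>
        simp [mul_add, add_mul, mul_assoc, map_mul]
      · abel
    one_mul := fun x => by refine Rext K m _ _ ?_ ?_ <;> simp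
    mul_one := fun x => by refine Rext K m _ _ ?_ ?_ <;> simp
    left_distrib := fun x y z => by
      refine Rext K m _ _ ?_ ?_ <;> simp [mul_add, add_mul, map_add] <;> abel
    right_distrib := fun x y z => by
      refine Rext K m _ _ ?_ ?_ <;> simp [mul_add, add_mul, map_add] <;> abel
    zero_mul := fun x => by refine Rext K m _ _ ?_ ?_ <;> simp
    mul_zero := fun x => by refine Rext K m _ _ ?_ ?_ <;> simp }

end FoxAux
namespace FoxAux
variable (K : Type) [CommRing K] (m : ℕ)

noncomputable def RalgMap : K →+* R K m where
  toFun k := Rmk K m (algebraMap K (A K m) k) 0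
  map_one' := by
    refine Rext K m _ _ ?_ ?_
    · exact map_one (algebraMap K (A K m))
    · rfl
  map_mul' x y := by
    refine Rext K m _ _ ?_ ?_
    · exact map_mul (algebraMap K (A K m)) x y
    · show (0 : A K m) = 0 * _ + _ * 0
      rw [zero_mul, mul_zero, add_zero]
  map_zero' := by
    refine Rext K m _ _ ?_ ?_
    · exact map_zero (algebraMap K (A K m))
    · rfl
  map_add' x y := by
    refine Rext K m _ _ ?_ ?_
    · exact map_add (algebraMap K (A K m)) x y
    · show (0 : A K m) = 0 + 0
      rw [add_zero]

noncomputable instance : Algebra K (R K m) :=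
  (RalgMap K m).toAlgebra' (by
    intro k x
    refine Rext K m _ _ ?_ ?_
    · show algebraMap K (A K m) k * Rfst K m x = Rfst K m x * algebraMap K (A K m) k
      exact Algebra.commutes k _
    · show 0 * E K m (Rfst K m x) + algebraMap K (A K m) k * Rsnd K m x
          = Rsnd K m x * E K m (algebraMap K (A K m) k) + Rfst K m x * 0
      rw [zero_mul, zero_add, mul_zero, add_zero]
      have hE : E K m (algebraMap K (A K m) k) = algebraMap K (A K m) k := by
        show (Algebra.ofId K (A K m)) (eps K m (algebraMap K (A K m) k)) = _
        rw [AlgHom.commutes, Algebra.ofId_apply]; simp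
      rw [hE, Algebra.commutes])

lemma algebraMap_R (k : K) :
    algebraMap K (R K m) k = Rmk K m (algebraMap K (A K m) k) 0 := rfl

noncomputable def delta (i j : Fin m) : A K m := if j = i then 1 else 0

/-- The unit `(X j, δ_{ij})` in the Fox ring. -/
noncomputable def unitX (i j : Fin m) : (R K m)ˣ where
  val := Rmk K m (X K m j) (delta K m i j)
  inv := Rmk K m (MonoidAlgebra.of K (FreeGroup (Fin m)) (FreeGroup.of j)⁻¹)
    (-(MonoidAlgebra.of K (FreeGroup (Fin m)) (FreeGroup.of j)⁻¹ * delta K m i j))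
  val_inv := by
    refine Rext K m _ _ ?_ ?_ <;>
      simp only [Rfst_mul, Rsnd_mul, Rfst_mk, Rsnd_mk, Rfst_one, Rsnd_one, X, E_of]
    · rw [← map_mul, mul_inv_cancel, map_one]
    · rw [mul_one, mul_neg, ← mul_assoc, ← map_mul, mul_inv_cancel, map_one, one_mul,
        add_neg_cancel]
  inv_val := by
    refine Rext K m _ _ ?_ ?_ <;>
      simp only [Rfst_mul, Rsnd_mul, Rfst_mk, Rsnd_mk, Rfst_one, Rsnd_one, X, E_of]
    · rw [← map_mul, inv_mul_cancel, map_one]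
    · rw [mul_one, neg_add_cancel]

noncomputable def gHom (i : Fin m) : FreeGroup (Fin m) →* (R K m)ˣ :=
  FreeGroup.lift (fun j => unitX K m i j)

noncomputable def F (i : Fin m) : A K m →ₐ[K] R K m :=
  (MonoidAlgebra.lift K (R K m) (FreeGroup (Fin m)))
    ((Units.coeHom (R K m)).comp (gHom K m i))

lemma F_of (i : Fin m) (g : FreeGroup (Fin m)) :
    F K m i (MonoidAlgebra.of K (FreeGroup (Fin m)) g) = ((gHom K m i g : (R K m)ˣ) : R K m) := by
  simp [F, MonoidAlgebra.lift_of]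

/-- first projection as an algebra hom -/
noncomputable def fstHom : R K m →ₐ[K] A K m where
  toFun := Rfst K m
  map_one' := rfl
  map_mul' x y := rfl
  map_zero' := rfl
  map_add' x y := rfl
  commutes' k := rfl

lemma algHom_ext_gen {B : Type} [Semiring B] [Algebra K B] (f g : A K m →ₐ[K] B)
    (h : ∀ j, f (X K m j) = g (X K m j)) : f = g := by
  refine MonoidAlgebra.algHom_ext' ?_ (Subsingleton.elim _ _)
  set f' := f.toRingHom.toMonoidHom.comp (MonoidAlgebra.of K (FreeGroup (Fin m)))
  set g' := g.toRingHom.toMonoidHom.comp (MonoidAlgebra.of K (FreeGroup (Fin m)))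
  show f' = g'
  have : f'.toHomUnits = g'.toHomUnits := by
    apply FreeGroup.ext_hom
    intro j
    ext
    exact h j
  refine MonoidHom.ext fun x => ?_
  calc f' x = (f'.toHomUnits x : B) := rfl
  _ = (g'.toHomUnits x : B) := by rw [this]
  _ = g' x := rfl

lemma fst_F (i : Fin m) (a : A K m) : Rfst K m (F K m i a) = a := by
  have : (fstHom K m).comp (F K m i) = AlgHom.id K (A K m) := by
    apply algHom_ext_gen
    intro j
    show Rfst K m (F K m i (X K m j)) = X K m j
    rw [X, F_of, gHom, FreeGroup.lift_apply_of]
    rfl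
  exact congrArg (fun φ => φ a) (congrArg DFunLike.coe this)

/-- The `i`-th Fox derivative as a `K`-linear map. -/
noncomputable def D (i : Fin m) : A K m →ₗ[K] A K m where
  toFun a := Rsnd K m (F K m i a)
  map_add' x y := by show Rsnd K m (F K m i (x + y)) = _; rw [map_add]; rfl
  map_smul' k x := by
    show Rsnd K m (F K m i (k • x)) = k • Rsnd K m (F K m i x)
    rw [map_smul, Algebra.smul_def k (F K m i x), algebraMap_R, Rsnd_mul, Rsnd_mk, Rfst_mk,
      zero_mul, zero_add, ← Algebra.smul_def]

lemma D_mul (i : Fin m) (a b : A K m) :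
    D K m i (a * b) = D K m i a * E K m b + a * D K m i b := by
  show Rsnd K m (F K m i (a * b)) = _
  rw [map_mul, Rsnd_mul, fst_F, fst_F]
  rfl

lemma D_X (i j : Fin m) : D K m i (X K m j) = delta K m i j := by
  show Rsnd K m (F K m i (X K m j)) = _
  rw [X, F_of, gHom, FreeGroup.lift_apply_of]
  rfl

@[simp] lemma D_one (i : Fin m) : D K m i 1 = 0 := by
  show Rsnd K m (F K m i 1) = 0
  rw [map_one]; rfl

/-- The fundamental Fox identity on group elements. -/
lemma fox_of (g : FreeGroup (Fin m)) :
    MonoidAlgebra.of K (FreeGroup (Fin m)) g - 1 =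
      ∑ i : Fin m, D K m i (MonoidAlgebra.of K (FreeGroup (Fin m)) g) * (X K m i - 1) := by
  set of' := MonoidAlgebra.of K (FreeGroup (Fin m)) with hof
  induction g using FreeGroup.induction_on with
  | C1 => rw [map_one]; simp
  | of j =>
      have hpj : (pure j : FreeGroup (Fin m)) = FreeGroup.of j := rfl
      have hDX : ∀ i : Fin m, D K m i (of' (FreeGroup.of j)) = delta K m i j := fun i => D_X K m i j
      rw [show of' (FreeGroup.of j) = X K m j from rfl]
      simp only [D_X]
      rw [Finset.sum_eq_single j]
      · simp [delta]
      · intro b _ hb; simp [delta, hb, Ne.symm hb]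
      · simp
  | inv_of j ih =>
      have hpj : (pure j : FreeGroup (Fin m)) = FreeGroup.of j := rfl
      have hinv : ∀ i, D K m i (of' (FreeGroup.of j)⁻¹) =
          -(of' (FreeGroup.of j)⁻¹ * D K m i (of' (FreeGroup.of j))) := by
        intro i
        have h1 : D K m i (of' (FreeGroup.of j) * of' (FreeGroup.of j)⁻¹) = 0 := by
          rw [← map_mul, mul_inv_cancel, map_one, D_one]
        rw [D_mul, E_of, mul_one] at h1
        have h2 := congrArg (fun t => of' (FreeGroup.of j)⁻¹ * t) h1
        simp only [mul_add, mul_zero, ← mul_assoc, ← map_mul, inv_mul_cancel, map_one,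
          one_mul] at h2
        exact eq_neg_of_add_eq_zero_right h2
      have key : of' (FreeGroup.of j)⁻¹ - 1
          = -(of' (FreeGroup.of j)⁻¹ * (of' (FreeGroup.of j) - 1)) := by
        rw [mul_sub, mul_one, ← map_mul, inv_mul_cancel, map_one, neg_sub]
      rw [key, ih, Finset.mul_sum, neg_eq_iff_eq_neg, ← Finset.sum_neg_distrib]
      refine Finset.sum_congr rfl fun i _ => ?_
      rw [hinv i, neg_mul, neg_neg, mul_assoc]
  | mul x y ihx ihy =>
      rw [map_mul]
      have hD : ∀ i, D K m i (of' x * of' y)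
          = D K m i (of' x) + of' x * D K m i (of' y) := fun i => by
        rw [D_mul, E_of, mul_one]
      calc of' x * of' y - 1 = (of' x - 1) + of' x * (of' y - 1) := by
            rw [mul_sub, mul_one]; abel
        _ = (∑ i : Fin m, D K m i (of' x) * (X K m i - 1))
              + of' x * ∑ i : Fin m, D K m i (of' y) * (X K m i - 1) := by rw [← ihx, ← ihy]
        _ = ∑ i : Fin m, (D K m i (of' x) + of' x * D K m i (of' y)) * (X K m i - 1) := by
            rw [Finset.mul_sum, ← Finset.sum_add_distrib]
            refine Finset.sum_congr rfl fun i _ => ?_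
            rw [add_mul, mul_assoc]
        _ = ∑ i : Fin m, D K m i (of' x * of' y) * (X K m i - 1) := by
            refine Finset.sum_congr rfl fun i _ => ?_
            rw [hD i]

end FoxAux
namespace FoxAux
variable (K : Type) [CommRing K] (m : ℕ)

/-- The fundamental Fox identity for all elements. -/
lemma fox (a : A K m) :
    a - E K m a = ∑ i : Fin m, D K m i a * (X K m i - 1) := by
  induction a using MonoidAlgebra.induction_on with
  | of g => rw [E_of]; exact fox_of K m g
  | add f g hf hg =>
      rw [map_add]
      calc f + g - (E K m f + E K m g) = (f - E K m f) + (g - E K m g) := by abel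
        _ = _ := by
          rw [hf, hg, ← Finset.sum_add_distrib]
          refine Finset.sum_congr rfl fun i _ => ?_
          rw [map_add, add_mul]
  | smul r f hf =>
      rw [map_smul, ← smul_sub, hf, Finset.smul_sum]
      refine Finset.sum_congr rfl fun i _ => ?_
      rw [map_smul, smul_mul_assoc]

section Ideal

variable (I : Submodule K (A K m))
variable (hI : I = Submodule.restrictScalars K
    (RingHom.ker (MonoidAlgebra.lift K K (FreeGroup (Fin m)) 1 :
      MonoidAlgebra K (FreeGroup (Fin m)) →ₐ[K] K)))
include hI

lemma mem_I_iff (a : A K m) : a ∈ I ↔ eps K m a = 0 := by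
  rw [hI]
  rfl

lemma E_eq_zero {a : A K m} (ha : a ∈ I) : E K m a = 0 := by
  have : eps K m a = 0 := (mem_I_iff K m I hI a).mp ha
  show (Algebra.ofId K (A K m)) (eps K m a) = 0
  rw [this, map_zero]

lemma X_sub_one_mem (j : Fin m) : X K m j - 1 ∈ I := by
  rw [mem_I_iff K m I hI, map_sub, map_one]
  rw [X]
  show eps K m (MonoidAlgebra.of K (FreeGroup (Fin m)) (FreeGroup.of j)) - 1 = 0
  rw [eps_of, sub_self]

lemma of_sub_one_mem (g : FreeGroup (Fin m)) :
    MonoidAlgebra.of K (FreeGroup (Fin m)) g - 1 ∈ I := by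
  rw [mem_I_iff K m I hI, map_sub, map_one, eps_of, sub_self]

/-- `I^k` is a right ideal for `k ≥ 1`. -/
lemma pow_mul_mem : ∀ (k : ℕ) {x : A K m}, x ∈ I ^ (k + 1) → ∀ c : A K m, x * c ∈ I ^ (k + 1) := by
  intro k
  induction k with
  | zero =>
      intro x hx c
      rw [pow_one] at hx ⊢
      rw [mem_I_iff K m I hI] at hx ⊢
      rw [map_mul, hx, zero_mul]
  | succ k ih =>
      intro x hx c
      rw [pow_succ] at hx ⊢
      refine Submodule.mul_induction_on hx (fun a ha b hb => ?_) (fun a b ha hb => ?_)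
      · have : a * b * c = a * (b * c) := mul_assoc _ _ _
        rw [this]
        -- b * c ∈ I since I is right ideal (k = 0 case)
        have hbc : b * c ∈ I := by
          rw [mem_I_iff K m I hI] at hb ⊢
          rw [map_mul, hb, zero_mul]
        exact Submodule.mul_mem_mul ha hbc
      · rw [add_mul]; exact Submodule.add_mem _ ha hb

lemma pow_le_I (k : ℕ) : I ^ (k + 1) ≤ I := by
  induction k with
  | zero => rw [pow_one]
  | succ k ih =>
      rw [pow_succ]
      refine Submodule.mul_le.mpr fun a ha b hb => ?_
      have : a * b ∈ I ^ (k + 1) := by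
        exact pow_mul_mem K m I hI k ha b
      exact ih this

/-- The Fox derivative maps `I^(k+2)` into `I^(k+1)`. -/
lemma D_pow_mem (i : Fin m) : ∀ (k : ℕ) {x : A K m}, x ∈ I ^ (k + 2) →
    D K m i x ∈ I ^ (k + 1) := by
  have key : ∀ (k : ℕ) {x : A K m}, x ∈ I ^ (k + 1) * I → D K m i x ∈ I ^ (k + 1) := by
    intro k x hx
    refine Submodule.mul_induction_on hx (fun a ha b hb => ?_) (fun a b ha hb => ?_)
    · rw [D_mul, E_eq_zero K m I hI hb, mul_zero, zero_add]
      exact pow_mul_mem K m I hI k ha _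
    · rw [map_add]; exact Submodule.add_mem _ ha hb
  intro k x hx
  rw [pow_succ] at hx
  exact key k hx

end Ideal
end FoxAux
namespace FoxAux
variable (K : Type) [CommRing K] (m : ℕ)
variable (I : Submodule K (A K m))
variable (hI : I = Submodule.restrictScalars K
    (RingHom.ker (MonoidAlgebra.lift K K (FreeGroup (Fin m)) 1 :
      MonoidAlgebra K (FreeGroup (Fin m)) →ₐ[K] K)))

/-- `Q k = I^k / I^(k+1)`. -/
abbrev Qmod (k : ℕ) : Type :=
  (↥(I ^ k)) ⧸ (Submodule.comap (I ^ k).subtype (I ^ (k + 1)))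

noncomputable abbrev qmk (k : ℕ) (x : ↥(I ^ k)) : Qmod K m I k := Submodule.Quotient.mk x

lemma qmk_eq_zero (k : ℕ) (x : ↥(I ^ k)) :
    qmk K m I k x = 0 ↔ (x : A K m) ∈ I ^ (k + 1) := by
  rw [Submodule.Quotient.mk_eq_zero, Submodule.mem_comap]
  rfl

lemma qmk_eq_qmk (k : ℕ) (x y : ↥(I ^ k)) (h : (x : A K m) - y ∈ I ^ (k + 1)) :
    qmk K m I k x = qmk K m I k y := by
  rw [Submodule.Quotient.eq]
  rw [Submodule.mem_comap]
  exact h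

/-- multiplication `I^n × I^1 → I^(n+1)` as a map into the quotient, for fixed `x`. -/
noncomputable def mulRaw (n : ℕ) (x : ↥(I ^ n)) : ↥(I ^ 1) →ₗ[K] ↥(I ^ (n + 1)) where
  toFun y := ⟨(x : A K m) * (y : A K m), by
    rw [pow_succ]
    exact Submodule.mul_mem_mul x.2 (by simpa using y.2)⟩
  map_add' y z := by ext; simp [mul_add]
  map_smul' c y := by ext; simp [mul_smul_comm]

noncomputable def mulQ1 (n : ℕ) (x : ↥(I ^ n)) : Qmod K m I 1 →ₗ[K] Qmod K m I (n + 1) :=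
  Submodule.liftQ _ ((Submodule.mkQ _).comp (mulRaw K m I n x)) (by
    intro y hy
    rw [Submodule.mem_comap] at hy
    simp only [LinearMap.mem_ker, LinearMap.comp_apply, Submodule.mkQ_apply]
    rw [qmk_eq_zero]
    show (x : A K m) * (y : A K m) ∈ I ^ (n + 2)
    rw [show n + 2 = n + 1 + 1 from rfl, pow_add I n 2]
    exact Submodule.mul_mem_mul x.2 hy)

lemma mulQ1_apply (n : ℕ) (x : ↥(I ^ n)) (y : ↥(I ^ 1)) :
    mulQ1 K m I n x (qmk K m I 1 y) =
      qmk K m I (n + 1) (mulRaw K m I n x y) := rfl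

/-- the bilinear multiplication map on quotients. -/
noncomputable def muBil (n : ℕ) :
    Qmod K m I n →ₗ[K] Qmod K m I 1 →ₗ[K] Qmod K m I (n + 1) :=
  Submodule.liftQ _
    { toFun := fun x => mulQ1 K m I n x
      map_add' := fun x x' => by
        refine Submodule.linearMap_qext _ ?_
        ext y
        simp only [LinearMap.comp_apply, Submodule.mkQ_apply, LinearMap.add_apply]
        have hxy : mulRaw K m I n (x + x') y = mulRaw K m I n x y + mulRaw K m I n x' y := by
          exact Subtype.ext (add_mul _ _ _)
        rw [mulQ1_apply, mulQ1_apply, mulQ1_apply, hxy]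
        rfl
      map_smul' := fun c x => by
        refine Submodule.linearMap_qext _ ?_
        ext y
        simp only [LinearMap.comp_apply, Submodule.mkQ_apply, LinearMap.smul_apply,
          RingHom.id_apply]
        have hxy : mulRaw K m I n (c • x) y = c • mulRaw K m I n x y := by
          exact Subtype.ext (smul_mul_assoc c _ _)
        rw [mulQ1_apply, mulQ1_apply, hxy]
        rfl }
    (by
      intro x hx
      rw [Submodule.mem_comap] at hx
      simp only [LinearMap.mem_ker]
      refine Submodule.linearMap_qext _ ?_
      ext y
      simp only [LinearMap.comp_apply, Submodule.mkQ_apply, LinearMap.zero_comp,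
        LinearMap.zero_apply, LinearMap.coe_mk, AddHom.coe_mk]
      rw [mulQ1_apply, qmk_eq_zero]
      show (x : A K m) * (y : A K m) ∈ I ^ (n + 2)
      rw [show n + 2 = n + 1 + 1 from rfl, pow_succ]
      exact Submodule.mul_mem_mul hx (by simpa using y.2))

lemma muBil_apply (n : ℕ) (x : ↥(I ^ n)) (y : ↥(I ^ 1)) :
    muBil K m I n (qmk K m I n x) (qmk K m I 1 y) =
      qmk K m I (n + 1) (mulRaw K m I n x y) := rfl

/-- restricted Fox derivative `I^(k+2) → I^(k+1)`. -/
noncomputable def Dres (i : Fin m) (k : ℕ) : ↥(I ^ (k + 2)) →ₗ[K] ↥(I ^ (k + 1)) where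
  toFun x := ⟨D K m i (x : A K m), D_pow_mem K m I hI i k x.2⟩
  map_add' x y := by ext; simp
  map_smul' c x := by ext; simp

open scoped TensorProduct

noncomputable def nuRaw (k : ℕ) :
    ↥(I ^ (k + 2)) →ₗ[K] (Qmod K m I (k + 1)) ⊗[K] (Qmod K m I 1) :=
  ∑ i : Fin m,
    ((TensorProduct.mk K (Qmod K m I (k + 1)) (Qmod K m I 1)).flip
        (qmk K m I 1 ⟨X K m i - 1, by rw [pow_one]; exact X_sub_one_mem K m I hI i⟩)).comp
      ((Submodule.mkQ _).comp (Dres K m I hI i k))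

lemma nuRaw_apply (k : ℕ) (x : ↥(I ^ (k + 2))) :
    nuRaw K m I hI k x = ∑ i : Fin m,
      (qmk K m I (k + 1) ⟨D K m i (x : A K m), D_pow_mem K m I hI i k x.2⟩) ⊗ₜ[K]
        (qmk K m I 1 ⟨X K m i - 1, by rw [pow_one]; exact X_sub_one_mem K m I hI i⟩) := by
  rw [nuRaw, LinearMap.sum_apply]
  rfl

noncomputable def nu (k : ℕ) :
    Qmod K m I (k + 2) →ₗ[K] (Qmod K m I (k + 1)) ⊗[K] (Qmod K m I 1) :=
  Submodule.liftQ _ (nuRaw K m I hI k) (by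
    intro x hx
    rw [Submodule.mem_comap] at hx
    simp only [LinearMap.mem_ker]
    rw [nuRaw_apply]
    refine Finset.sum_eq_zero fun i _ => ?_
    have : qmk K m I (k + 1) ⟨D K m i (x : A K m), D_pow_mem K m I hI i k x.2⟩ = 0 := by
      rw [qmk_eq_zero]
      exact D_pow_mem K m I hI i (k + 1) hx
    rw [this, TensorProduct.zero_tmul])

lemma nu_apply (k : ℕ) (x : ↥(I ^ (k + 2))) :
    nu K m I hI k (qmk K m I (k + 2) x) = nuRaw K m I hI k x := rfl

end FoxAux
namespace FoxAux
open scoped TensorProduct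
variable (K : Type) [CommRing K] (m : ℕ)
variable (I : Submodule K (A K m))
variable (hI : I = Submodule.restrictScalars K
    (RingHom.ker (MonoidAlgebra.lift K K (FreeGroup (Fin m)) 1 :
      MonoidAlgebra K (FreeGroup (Fin m)) →ₐ[K] K)))

noncomputable def mulin (n : ℕ) :
    (Qmod K m I n) ⊗[K] (Qmod K m I 1) →ₗ[K] Qmod K m I (n + 1) :=
  TensorProduct.lift (muBil K m I n)

lemma mulin_tmul (n : ℕ) (x : ↥(I ^ n)) (y : ↥(I ^ 1)) :
    mulin K m I n (qmk K m I n x ⊗ₜ[K] qmk K m I 1 y) =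
      qmk K m I (n + 1) (mulRaw K m I n x y) := by
  rw [mulin, TensorProduct.lift.tmul]
  rfl

lemma mem_pow_one {a : A K m} (ha : a ∈ I) : a ∈ I ^ 1 := by
  rw [pow_one]; exact ha

lemma mem_pow_succ {k : ℕ} {a b : A K m} (ha : a ∈ I ^ (k + 1)) (hb : b ∈ I) :
    a * b ∈ I ^ (k + 2) := by
  have : a * b ∈ I ^ (k + 1) * I := Submodule.mul_mem_mul ha hb
  rwa [← pow_succ] at this

lemma qmk_sum (p : ℕ) {ι : Type} (t : Finset ι) (f : ι → ↥(I ^ p)) :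
    qmk K m I p (∑ i ∈ t, f i) = ∑ i ∈ t, qmk K m I p (f i) :=
  map_sum (Submodule.mkQ _) f t

lemma E_mul (c a : A K m) : E K m c * a = eps K m c • a := by
  show (Algebra.ofId K (A K m)) (eps K m c) * a = _
  rw [Algebra.ofId_apply, ← Algebra.smul_def]

lemma eps_E (a : A K m) : eps K m (E K m a) = eps K m a := by
  show eps K m ((Algebra.ofId K (A K m)) (eps K m a)) = _
  rw [Algebra.ofId_apply, AlgHom.commutes]
  simp

include hI

lemma sub_E_mem (a : A K m) : a - E K m a ∈ I := by
  rw [mem_I_iff K m I hI, map_sub, eps_E, sub_self]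

lemma mulin_nu (k : ℕ) : (mulin K m I (k + 1)).comp (nu K m I hI k) = LinearMap.id := by
  refine Submodule.linearMap_qext _ ?_
  ext x
  simp only [LinearMap.comp_apply, Submodule.mkQ_apply, LinearMap.id_apply]
  rw [nu_apply, nuRaw_apply, map_sum]
  have hterm : ∀ i : Fin m,
      mulin K m I (k + 1) ((qmk K m I (k + 1) ⟨D K m i (x : A K m), D_pow_mem K m I hI i k x.2⟩) ⊗ₜ[K]
        (qmk K m I 1 ⟨X K m i - 1, by rw [pow_one]; exact X_sub_one_mem K m I hI i⟩)) =
      qmk K m I (k + 2) ⟨D K m i (x : A K m) * (X K m i - 1), by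
        exact mem_pow_succ K m I (D_pow_mem K m I hI i k x.2) (X_sub_one_mem K m I hI i)⟩ := by
    intro i
    rw [mulin_tmul]
    rfl
  rw [Finset.sum_congr rfl fun i _ => hterm i]
  have hsum : (∑ i : Fin m, (⟨D K m i (x : A K m) * (X K m i - 1), by
        exact mem_pow_succ K m I (D_pow_mem K m I hI i k x.2) (X_sub_one_mem K m I hI i)⟩ :
        ↥(I ^ (k + 2)))) = x := by
    ext
    push_cast
    rw [← fox K m (x : A K m)]
    have hEx : E K m (x : A K m) = 0 :=
      E_eq_zero K m I hI (pow_le_I K m I hI (k + 1) x.2)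
    rw [hEx, sub_zero]
  conv_rhs => rw [← hsum]
  exact (qmk_sum K m I (k + 2) Finset.univ _).symm

lemma nu_mulin (k : ℕ) : (nu K m I hI k).comp (mulin K m I (k + 1)) = LinearMap.id := by
  refine TensorProduct.ext' fun z w => ?_
  obtain ⟨x, rfl⟩ := Submodule.Quotient.mk_surjective _ z
  obtain ⟨y, rfl⟩ := Submodule.Quotient.mk_surjective _ w
  simp only [LinearMap.comp_apply, LinearMap.id_apply]
  rw [show (Submodule.Quotient.mk x : Qmod K m I (k+1)) = qmk K m I (k+1) x from rfl,
    show (Submodule.Quotient.mk y : Qmod K m I 1) = qmk K m I 1 y from rfl,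
    mulin_tmul, nu_apply, nuRaw_apply]
  have hyI : (y : A K m) ∈ I := by simpa using y.2
  have hDxy : ∀ i : Fin m, D K m i ((mulRaw K m I (k+1) x y : A K m))
      = (x : A K m) * D K m i (y : A K m) := by
    intro i
    show D K m i ((x : A K m) * (y : A K m)) = _
    rw [D_mul, E_eq_zero K m I hI hyI, mul_zero, zero_add]
  have stepA : ∀ i : Fin m,
      (qmk K m I (k + 1) ⟨D K m i ((mulRaw K m I (k+1) x y : A K m)),
        D_pow_mem K m I hI i k (mulRaw K m I (k+1) x y).2⟩)
      = eps K m (D K m i (y : A K m)) • qmk K m I (k + 1) x := by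
    intro i
    rw [← Submodule.Quotient.mk_smul]
    refine qmk_eq_qmk K m I (k+1) _ _ ?_
    push_cast
    rw [hDxy i]
    have : (x : A K m) * D K m i (y : A K m) - eps K m (D K m i (y : A K m)) • (x : A K m)
        = (x : A K m) * (D K m i (y : A K m) - E K m (D K m i (y : A K m))) := by
      rw [mul_sub]
      congr 1
      rw [E_comm, E_mul]
    rw [this]
    exact mem_pow_succ K m I x.2 (sub_E_mem K m I hI _)
  rw [Finset.sum_congr rfl fun i _ => by rw [stepA i, TensorProduct.smul_tmul]]
  rw [← TensorProduct.tmul_sum]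
  congr 1
  -- ∑ i, eps (D i y) • [X i - 1] = [y]
  have : (∑ i : Fin m, eps K m (D K m i (y : A K m)) •
      (⟨X K m i - 1, by rw [pow_one]; exact X_sub_one_mem K m I hI i⟩ : ↥(I ^ 1)))
      = ∑ i : Fin m, (⟨eps K m (D K m i (y : A K m)) • (X K m i - 1),
          mem_pow_one K m I (Submodule.smul_mem _ _ (X_sub_one_mem K m I hI i))⟩ : ↥(I ^ 1)) := by
    rfl
  calc ∑ i : Fin m, eps K m (D K m i (y : A K m)) • qmk K m I 1 _
      = qmk K m I 1 (∑ i : Fin m, eps K m (D K m i (y : A K m)) •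
          (⟨X K m i - 1, by rw [pow_one]; exact X_sub_one_mem K m I hI i⟩ : ↥(I ^ 1))) := by
        rw [Finset.sum_congr rfl fun i (_ : i ∈ Finset.univ) =>
          (Submodule.Quotient.mk_smul _ (eps K m (D K m i (y : A K m)))
            (⟨X K m i - 1, by rw [pow_one]; exact X_sub_one_mem K m I hI i⟩ : ↥(I ^ 1))).symm]
        exact (qmk_sum K m I 1 _ _).symm
    _ = qmk K m I 1 y := by
        refine qmk_eq_qmk K m I 1 _ _ ?_
        push_cast
        have hfox : (y : A K m) = ∑ i : Fin m, D K m i (y : A K m) * (X K m i - 1) := by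
          have := fox K m (y : A K m)
          rw [E_eq_zero K m I hI hyI, sub_zero] at this
          exact this
        have h1 : ∑ i : Fin m, (E K m (D K m i (y : A K m)) - D K m i (y : A K m)) * (X K m i - 1)
            = (∑ i : Fin m, eps K m (D K m i (y : A K m)) • (X K m i - 1)) - (y : A K m) := by
          simp only [sub_mul]
          rw [Finset.sum_sub_distrib, ← hfox]
          congr 1
          exact Finset.sum_congr rfl fun i _ => E_mul K m _ _
        rw [← h1]
        refine Submodule.sum_mem _ fun i _ => ?_
        rw [pow_two]
        refine Submodule.mul_mem_mul ?_ (X_sub_one_mem K m I hI i)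
        have hd := sub_E_mem K m I hI (D K m i (y : A K m))
        simpa using
          (neg_mem hd : -(D K m i (y : A K m) - E K m (D K m i (y : A K m))) ∈ I)

/-- the key step equivalence `I^(k+2)/I^(k+3) ≃ (I^(k+1)/I^(k+2)) ⊗ (I/I²)`. -/
noncomputable def stepEquiv (k : ℕ) :
    Qmod K m I (k + 2) ≃ₗ[K] (Qmod K m I (k + 1)) ⊗[K] (Qmod K m I 1) :=
  LinearEquiv.ofLinear (nu K m I hI k) (mulin K m I (k + 1))
    (nu_mulin K m I hI k) (mulin_nu K m I hI k)

lemma stepEquiv_apply (k : ℕ) (x : ↥(I ^ (k + 1))) (y : ↥(I ^ 1)) :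
    stepEquiv K m I hI k (qmk K m I (k + 2) (mulRaw K m I (k + 1) x y)) =
      qmk K m I (k + 1) x ⊗ₜ[K] qmk K m I 1 y := by
  show nu K m I hI k (qmk K m I (k + 2) (mulRaw K m I (k + 1) x y)) = _
  rw [← mulin_tmul K m I (k + 1) x y]
  simpa using LinearMap.congr_fun (nu_mulin K m I hI k)
    (qmk K m I (k + 1) x ⊗ₜ[K] qmk K m I 1 y)

end FoxAux
namespace FoxAux
open scoped TensorProduct
variable (K : Type) [CommRing K] (m : ℕ)
variable (I : Submodule K (A K m))
variable (hI : I = Submodule.restrictScalars K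
    (RingHom.ker (MonoidAlgebra.lift K K (FreeGroup (Fin m)) 1 :
      MonoidAlgebra K (FreeGroup (Fin m)) →ₐ[K] K)))

noncomputable def glue (k : ℕ) :
    ((⨂[K]^(k+1) (Qmod K m I 1)) ⊗[K] (Qmod K m I 1)) ≃ₗ[K] (⨂[K]^(k+2) (Qmod K m I 1)) :=
  (TensorProduct.congr (LinearEquiv.refl K _)
      (PiTensorProduct.subsingletonEquiv (0 : Fin 1)).symm).trans
    ((PiTensorProduct.tmulEquiv K (Qmod K m I 1)).trans
      (PiTensorProduct.reindex K (fun _ => Qmod K m I 1) finSumFinEquiv))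

lemma glue_tprod (k : ℕ) (f : Fin (k+1) → Qmod K m I 1) (c : Qmod K m I 1) :
    glue K m I k ((PiTensorProduct.tprod K f) ⊗ₜ[K] c)
      = PiTensorProduct.tprod K
          (fun j : Fin (k+2) => Sum.elim f (fun _ : Fin 1 => c) (finSumFinEquiv.symm j)) := by
  rw [glue, LinearEquiv.trans_apply, LinearEquiv.trans_apply, TensorProduct.congr_tmul]
  have h1 : (PiTensorProduct.subsingletonEquiv (0 : Fin 1)).symm c
      = PiTensorProduct.tprod K (fun _ : Fin 1 => c) := by
    rw [LinearEquiv.symm_apply_eq, PiTensorProduct.subsingletonEquiv_apply_tprod]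
  rw [LinearEquiv.refl_apply, h1, PiTensorProduct.tmulEquiv_apply, PiTensorProduct.reindex_tprod]

include hI

lemma listprod_mem (l : List (A K m)) (hl : ∀ a ∈ l, a ∈ I) : l.prod ∈ I ^ l.length := by
  induction l with
  | nil =>
      rw [List.prod_nil, List.length_nil, pow_zero]
      exact Submodule.one_le.mp le_rfl
  | cons a t ih =>
      rw [List.prod_cons, List.length_cons, pow_succ']
      exact Submodule.mul_mem_mul (hl a List.mem_cons_self)
        (ih fun b hb => hl b (List.mem_cons_of_mem a hb))

lemma ofFn_prod_mem (n : ℕ) (γ : Fin n → FreeGroup (Fin m)) :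
    (List.ofFn fun i => MonoidAlgebra.of K (FreeGroup (Fin m)) (γ i) - 1).prod ∈ I ^ n := by
  have h := listprod_mem K m I hI
    (List.ofFn fun i => MonoidAlgebra.of K (FreeGroup (Fin m)) (γ i) - 1) (by
      intro a ha
      rw [List.mem_ofFn] at ha
      obtain ⟨i, rfl⟩ := ha
      exact of_sub_one_mem K m I hI (γ i))
  rwa [List.length_ofFn] at h

lemma main (k : ℕ) :
    ∃ e : (Qmod K m I (k + 1)) ≃ₗ[K] (⨂[K]^(k+1) (Qmod K m I 1)),
      ∀ (γ : Fin (k + 1) → FreeGroup (Fin m))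
        (h : (List.ofFn (fun i =>
            MonoidAlgebra.of K (FreeGroup (Fin m)) (γ i) - 1)).prod ∈ I ^ (k + 1))
        (h' : ∀ i, MonoidAlgebra.of K (FreeGroup (Fin m)) (γ i) - 1 ∈ I ^ 1),
        e (Submodule.Quotient.mk
            ⟨(List.ofFn (fun i => MonoidAlgebra.of K (FreeGroup (Fin m)) (γ i) - 1)).prod, h⟩) =
          PiTensorProduct.tprod K (fun i => Submodule.Quotient.mk
            ⟨MonoidAlgebra.of K (FreeGroup (Fin m)) (γ i) - 1, h' i⟩) := by
  induction k with
  | zero =>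
      refine ⟨(PiTensorProduct.subsingletonEquiv (R := K) (s := fun _ : Fin 1 => Qmod K m I 1) (0 : Fin 1)).symm, ?_⟩
      intro γ h h'
      rw [LinearEquiv.symm_apply_eq, PiTensorProduct.subsingletonEquiv_apply_tprod]
      congr 1
      exact Subtype.ext (by simp [List.ofFn_succ])
  | succ k ih =>
      obtain ⟨e, he⟩ := ih
      refine ⟨(stepEquiv K m I hI k).trans
        ((TensorProduct.congr e (LinearEquiv.refl K (Qmod K m I 1))).trans
          (glue K m I k)), ?_⟩
      intro γ h h'
      have hp : (List.ofFn (fun i : Fin (k+2) =>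
            MonoidAlgebra.of K (FreeGroup (Fin m)) (γ i) - 1)).prod
          = (List.ofFn (fun i : Fin (k+1) =>
              MonoidAlgebra.of K (FreeGroup (Fin m)) (γ i.castSucc) - 1)).prod *
            (MonoidAlgebra.of K (FreeGroup (Fin m)) (γ (Fin.last (k+1))) - 1) := by
        rw [List.ofFn_succ', List.prod_concat]
      have hmem' : (List.ofFn (fun i : Fin (k+1) =>
          MonoidAlgebra.of K (FreeGroup (Fin m)) (γ i.castSucc) - 1)).prod ∈ I ^ (k+1) :=
        ofFn_prod_mem K m I hI (k+1) (fun i => γ i.castSucc)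
      have hy : MonoidAlgebra.of K (FreeGroup (Fin m)) (γ (Fin.last (k+1))) - 1 ∈ I ^ 1 :=
        h' (Fin.last (k+1))
      have hsub : (⟨(List.ofFn (fun i : Fin (k+2) =>
            MonoidAlgebra.of K (FreeGroup (Fin m)) (γ i) - 1)).prod, h⟩ : ↥(I ^ (k+2)))
          = mulRaw K m I (k+1) ⟨_, hmem'⟩ ⟨_, hy⟩ := Subtype.ext hp
      rw [LinearEquiv.trans_apply, LinearEquiv.trans_apply]
      rw [show (Submodule.Quotient.mk ⟨(List.ofFn (fun i : Fin (k+2) =>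
            MonoidAlgebra.of K (FreeGroup (Fin m)) (γ i) - 1)).prod, h⟩ : Qmod K m I (k+2))
          = qmk K m I (k+2) (mulRaw K m I (k+1) ⟨_, hmem'⟩ ⟨_, hy⟩) from congrArg _ hsub]
      rw [stepEquiv_apply K m I hI k]
      rw [TensorProduct.congr_tmul]
      rw [he (fun i => γ i.castSucc) hmem' (fun i => h' i.castSucc)]
      rw [LinearEquiv.refl_apply]
      rw [glue_tprod K m I k]
      congr 1
      funext j
      induction j using Fin.lastCases with
      | last =>
          have hj : finSumFinEquiv.symm (Fin.last (k+1)) = Sum.inr (0 : Fin 1) := by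
            rw [Equiv.symm_apply_eq]
            exact Fin.ext (by simp)
          rw [hj]
          rfl
      | cast j =>
          have hj : finSumFinEquiv.symm j.castSucc = Sum.inl j := by
            rw [Equiv.symm_apply_eq]
            exact Fin.ext (by simp)
          rw [hj]
          rfl

end FoxAux

/-- Let `Γ` be a finitely generated free group, `K` a commutative ring, `I` the augmentation
ideal of `K[Γ]`.  For every `n ≥ 1`, the map `Iⁿ/Iⁿ⁺¹ → (I/I²)^⊗n` sending the class of
`(γ₁ − 1)⋯(γₙ − 1)` to `[γ₁ − 1] ⊗ ⋯ ⊗ [γₙ − 1]` is a well-defined isomorphism of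
`K`-modules. -/
theorem stmt_3 (K : Type) [CommRing K] (m : ℕ) (n : ℕ) (hn : 1 ≤ n)
    (I : Submodule K (MonoidAlgebra K (FreeGroup (Fin m))))
    (hI : I = Submodule.restrictScalars K
      (RingHom.ker (MonoidAlgebra.lift K K (FreeGroup (Fin m)) 1 :
        MonoidAlgebra K (FreeGroup (Fin m)) →ₐ[K] K))) :
    ∃ e : ((↥(I ^ n)) ⧸ (Submodule.comap (I ^ n).subtype (I ^ (n + 1)))) ≃ₗ[K]
        (⨂[K]^n ((↥(I ^ 1)) ⧸ (Submodule.comap (I ^ 1).subtype (I ^ 2)))),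
      ∀ (γ : Fin n → FreeGroup (Fin m))
        (h : (List.ofFn (fun i =>
            MonoidAlgebra.of K (FreeGroup (Fin m)) (γ i) - 1)).prod ∈ I ^ n)
        (h' : ∀ i, MonoidAlgebra.of K (FreeGroup (Fin m)) (γ i) - 1 ∈ I ^ 1),
        e (Submodule.Quotient.mk
            ⟨(List.ofFn (fun i => MonoidAlgebra.of K (FreeGroup (Fin m)) (γ i) - 1)).prod, h⟩) =
          PiTensorProduct.tprod K (fun i => Submodule.Quotient.mk
            ⟨MonoidAlgebra.of K (FreeGroup (Fin m)) (γ i) - 1, h' i⟩) := by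
  obtain ⟨k, rfl⟩ : ∃ k, n = k + 1 := ⟨n - 1, (Nat.succ_pred_eq_of_pos hn).symm⟩
  exact FoxAux.main K m I hI k
end

section
/- Let Γ be a finitely generated free group and I the augmentation ideal of ℤ[Γ]. Then for every n ≥ 1, the quotient ℤ[Γ]/Iⁿ is a free ℤ-module (of finite rank). -/
set_option maxHeartbeats 1000000
set_option synthInstance.maxHeartbeats 400000

namespace Stmt4Aux

noncomputable section

variable (m n : ℕ)

/-- Words of length `< n`. -/
abbrev Wlt := {l : List (Fin m) // l.length < n}

instance : Finite (Wlt m n) := (List.finite_length_lt (Fin m) n).to_subtype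

instance : IsEmpty (Wlt m 0) := ⟨fun w => absurd w.2 (by omega)⟩

/-- The truncated free module. -/
abbrev D := Wlt m n →₀ ℤ

/-- The length filtration on `D`. -/
def Dge (k : ℕ) : Submodule ℤ (D m n) :=
  Finsupp.supported ℤ ℤ {w : Wlt m n | k ≤ w.1.length}

lemma Dge_mono {a b : ℕ} (h : a ≤ b) : Dge m n b ≤ Dge m n a :=
  Finsupp.supported_mono (fun _ hw => le_trans h hw)

lemma mem_Dge_zero (x : D m n) : x ∈ Dge m n 0 := by
  intro w _; simp [Set.mem_setOf_eq]

lemma eq_zero_of_mem_Dge_n {x : D m n} (hx : x ∈ Dge m n n) : x = 0 := by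
  ext w
  by_contra h
  exact absurd (hx (Finsupp.mem_support_iff.mpr h)) (by simpa using not_le.mpr w.2)

lemma single_mem_Dge {k : ℕ} {w : Wlt m n} (h : k ≤ w.1.length) (c : ℤ) :
    Finsupp.single w c ∈ Dge m n k := by
  intro v hv
  have := Finsupp.support_single_subset hv
  simp only [Finset.mem_singleton] at this
  subst this
  exact h

/-- Operators raising the filtration degree by at least `k`. -/
def A (k : ℕ) : Submodule ℤ (Module.End ℤ (D m n)) where
  carrier := {f | ∀ j x, x ∈ Dge m n j → f x ∈ Dge m n (j + k)}
  add_mem' := fun hf hg j x hx => by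
    simpa using Submodule.add_mem _ (hf j x hx) (hg j x hx)
  zero_mem' := fun j x hx => by simp
  smul_mem' := fun c f hf j x hx => by
    simpa using Submodule.smul_mem _ c (hf j x hx)

lemma one_mem_A_zero : (1 : Module.End ℤ (D m n)) ∈ A m n 0 := by
  intro j x hx; simpa using hx

lemma A_antitone {a b : ℕ} (h : a ≤ b) : A m n b ≤ A m n a := by
  intro f hf j x hx
  exact Dge_mono m n (by omega) (hf j x hx)

lemma mul_mem_A {a b : ℕ} {f g : Module.End ℤ (D m n)} (hf : f ∈ A m n a) (hg : g ∈ A m n b) :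
    f * g ∈ A m n (a + b) := by
  intro j x hx
  have h2 : f (g x) ∈ Dge m n (j + b + a) := hf _ _ (hg j x hx)
  have he : j + b + a = j + (a + b) := by omega
  rw [he] at h2
  exact h2

lemma pow_mem_A {f : Module.End ℤ (D m n)} (hf : f ∈ A m n 1) (k : ℕ) : f ^ k ∈ A m n k := by
  induction k with
  | zero => simpa using one_mem_A_zero m n
  | succ k ih =>
    have := mul_mem_A m n ih hf
    rwa [← pow_succ] at this

lemma eq_zero_of_mem_A_n {f : Module.End ℤ (D m n)} (hf : f ∈ A m n n) : f = 0 := by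
  apply LinearMap.ext
  intro x
  have h := hf 0 x (mem_Dge_zero m n x)
  rw [Nat.zero_add] at h
  simpa using eq_zero_of_mem_Dge_n m n h

/-- Truncated left multiplication by the letter `i`. -/
def N (i : Fin m) : Module.End ℤ (D m n) :=
  Finsupp.lift (D m n) ℤ (Wlt m n)
    (fun w => if h : w.1.length + 1 < n then Finsupp.single ⟨i :: w.1, h⟩ 1 else 0)

lemma N_single (i : Fin m) (w : Wlt m n) (c : ℤ) :
    N m n i (Finsupp.single w c) =
      if h : w.1.length + 1 < n then Finsupp.single ⟨i :: w.1, h⟩ c else 0 := by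
  rw [N, Finsupp.lift_apply, Finsupp.sum_single_index (by simp)]
  by_cases h : w.1.length + 1 < n
  · rw [dif_pos h, dif_pos h, Finsupp.smul_single, smul_eq_mul, mul_one]
  · rw [dif_neg h, dif_neg h, smul_zero]

lemma N_mem_A_one (i : Fin m) : N m n i ∈ A m n 1 := by
  intro j x hx
  have hspan : x ∈ Submodule.span ℤ ((fun w => Finsupp.single w (1:ℤ)) ''
      {w : Wlt m n | j ≤ w.1.length}) := by
    rw [← Finsupp.supported_eq_span_single]; exact hx
  refine Submodule.span_induction ?_ (by simp) (fun a b _ _ ha hb => by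
      simpa using Submodule.add_mem _ ha hb)
    (fun c a _ ha => by simpa using Submodule.smul_mem _ c ha) hspan
  rintro y ⟨w, hw, rfl⟩
  rw [N_single]
  by_cases h : w.1.length + 1 < n
  · rw [dif_pos h]
    exact single_mem_Dge m n (by simpa using Nat.succ_le_succ hw) 1
  · rw [dif_neg h]
    exact Submodule.zero_mem _

lemma N_pow_eq_zero (i : Fin m) : (N m n i) ^ n = 0 :=
  eq_zero_of_mem_A_n m n (pow_mem_A m n (N_mem_A_one m n i) n)

lemma neg_N_pow_eq_zero (i : Fin m) : (-(N m n i)) ^ n = 0 := by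
  rw [neg_pow, N_pow_eq_zero]; simp

/-- The Magnus unit `1 + Nᵢ`. -/
def u (i : Fin m) : (Module.End ℤ (D m n))ˣ where
  val := 1 + N m n i
  inv := ∑ k ∈ Finset.range n, (-(N m n i)) ^ k
  val_inv := by
    have h := mul_geom_sum (-(N m n i)) n
    rw [neg_N_pow_eq_zero, zero_sub] at h
    have e2 : -((-(N m n i) - 1) * ∑ k ∈ Finset.range n, (-(N m n i)) ^ k) =
        (1 + N m n i) * ∑ k ∈ Finset.range n, (-(N m n i)) ^ k := by
      rw [← neg_mul, neg_sub, sub_neg_eq_add]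
    rw [← e2, h, neg_neg]
  inv_val := by
    have h := geom_sum_mul (-(N m n i)) n
    rw [neg_N_pow_eq_zero, zero_sub] at h
    have e2 : -((∑ k ∈ Finset.range n, (-(N m n i)) ^ k) * (-(N m n i) - 1)) =
        (∑ k ∈ Finset.range n, (-(N m n i)) ^ k) * (1 + N m n i) := by
      rw [← mul_neg, neg_sub, sub_neg_eq_add]
    rw [← e2, h, neg_neg]

abbrev Γm := FreeGroup (Fin m)
abbrev Rm := MonoidAlgebra ℤ (Γm m)

/-- The augmentation. -/
abbrev aug : Rm m →ₐ[ℤ] ℤ := MonoidAlgebra.lift ℤ ℤ (Γm m) 1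

/-- The augmentation ideal, as a `ℤ`-submodule. -/
def J : Submodule ℤ (Rm m) := Submodule.restrictScalars ℤ (RingHom.ker (aug m))

lemma mem_J {a : Rm m} : a ∈ J m ↔ aug m a = 0 := by
  simp [J, RingHom.mem_ker]

lemma aug_of (g : Γm m) : aug m (MonoidAlgebra.of ℤ (Γm m) g) = 1 := by
  rw [MonoidAlgebra.lift_of]; rfl

/-- The group homomorphism to units of `End D`. -/
def gp : Γm m →* (Module.End ℤ (D m n))ˣ := FreeGroup.lift (u m n)

/-- The Magnus homomorphism. -/
def Φ : Rm m →ₐ[ℤ] Module.End ℤ (D m n) :=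
  MonoidAlgebra.lift ℤ _ (Γm m) ((Units.coeHom _).comp (gp m n))

lemma Φ_of (g : Γm m) :
    Φ m n (MonoidAlgebra.of ℤ (Γm m) g) = (gp m n g : Module.End ℤ (D m n)) := by
  rw [Φ, MonoidAlgebra.lift_of]; rfl

lemma gp_sub_one_mem (g : Γm m) :
    (gp m n g : Module.End ℤ (D m n)) - 1 ∈ A m n 1 ∧
    ((gp m n g)⁻¹ : (Module.End ℤ (D m n))ˣ).val - 1 ∈ A m n 1 := by
  have key : ∀ {x y : (Module.End ℤ (D m n))ˣ},
      (x:Module.End ℤ (D m n)) - 1 ∈ A m n 1 → (y:Module.End ℤ (D m n)) - 1 ∈ A m n 1 →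
      ((x*y:_ˣ):Module.End ℤ (D m n)) - 1 ∈ A m n 1 := by
    intro x y hx hy
    have : ((x*y:_ˣ):Module.End ℤ (D m n)) - 1 =
        ((x:Module.End ℤ (D m n)) - 1) * ((y:Module.End ℤ (D m n)) - 1) +
        ((x:Module.End ℤ (D m n)) - 1) + ((y:Module.End ℤ (D m n)) - 1) := by
      push_cast
      noncomm_ring
    rw [this]
    exact Submodule.add_mem _ (Submodule.add_mem _
      (A_antitone m n (by norm_num) (mul_mem_A m n hx hy)) hx) hy
  induction g using FreeGroup.induction_on with
  | C1 => constructor <;> · rw [map_one]; simpa using Submodule.zero_mem (A m n 1)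
  | of i =>
    have hg : gp m n (FreeGroup.of i) = u m n i := FreeGroup.lift_apply_of
    have hbase : (u m n i : Module.End ℤ (D m n)) - 1 ∈ A m n 1 := by
      show (1 + N m n i) - 1 ∈ A m n 1
      simpa using N_mem_A_one m n i
    have hinv : ((u m n i)⁻¹ : (Module.End ℤ (D m n))ˣ).val - 1 ∈ A m n 1 := by
      show (∑ k ∈ Finset.range n, (-(N m n i)) ^ k) - 1 ∈ A m n 1
      rcases Nat.eq_zero_or_pos n with h0 | hpos
      · subst h0
        have : Subsingleton (D m 0) := ⟨fun x y => Finsupp.ext (fun w => isEmptyElim w)⟩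
        rw [Subsingleton.elim ((∑ k ∈ Finset.range 0, (-(N m 0 i)) ^ k) - 1)
          (0 : Module.End ℤ (D m 0))]
        exact Submodule.zero_mem _
      · obtain ⟨n', rfl⟩ : ∃ n', n = n' + 1 := ⟨n - 1, by omega⟩
        rw [Finset.sum_range_succ']
        simp only [pow_zero, add_sub_cancel_right]
        refine Submodule.sum_mem _ (fun k _ => ?_)
        refine A_antitone m (n'+1) (by omega) (pow_mem_A m (n'+1) ?_ (k+1))
        exact Submodule.neg_mem _ (N_mem_A_one m (n'+1) i)
    rw [hg]
    exact ⟨hbase, hinv⟩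
  | inv_of i ih =>
    rw [map_inv]
    exact ⟨ih.2, by rw [inv_inv]; exact ih.1⟩
  | mul x y ihx ihy =>
    rw [map_mul]
    refine ⟨key ihx.1 ihy.1, ?_⟩
    rw [mul_inv_rev]
    exact key ihy.2 ihx.2

lemma Φ_sub_mem (a : Rm m) : Φ m n a - (aug m a) • 1 ∈ A m n 1 := by
  induction a using MonoidAlgebra.induction_linear with
  | zero => simpa using Submodule.zero_mem (A m n 1)
  | add f g hf hg =>
    have := Submodule.add_mem _ hf hg
    have he : Φ m n (f + g) - (aug m (f + g)) • 1 =
        (Φ m n f - (aug m f) • 1) + (Φ m n g - (aug m g) • 1) := by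
      rw [map_add, map_add, add_smul]; abel
    rw [he]
    exact this
  | single g c =>
    have h1 : (MonoidAlgebra.single g c : Rm m) = c • MonoidAlgebra.of ℤ (Γm m) g := by
      rw [MonoidAlgebra.of_apply, MonoidAlgebra.smul_single', mul_one]
    rw [h1, map_smul, map_smul, aug_of, smul_assoc]
    have he : c • Φ m n (MonoidAlgebra.of ℤ (Γm m) g) - c • ((1:ℤ) • (1 : Module.End ℤ (D m n)))
        = c • (Φ m n (MonoidAlgebra.of ℤ (Γm m) g) - 1) := by
      rw [one_smul, smul_sub]
    rw [he]
    refine Submodule.smul_mem _ c ?_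
    rw [Φ_of]
    exact (gp_sub_one_mem m n g).1

lemma Φ_mem_J {b : Rm m} (hb : b ∈ J m) : Φ m n b ∈ A m n 1 := by
  rw [mem_J] at hb
  have := Φ_sub_mem m n b
  rw [hb, zero_smul, sub_zero] at this
  exact this

lemma Φ_mem_A_n {a : Rm m} (ha : a ∈ (J m) ^ n) : Φ m n a ∈ A m n n := by
  refine Submodule.pow_induction_on_left' (M := J m)
    (C := fun k x _ => Φ m n x ∈ A m n k) ?_ ?_ ?_ ha
  · intro r
    rw [AlgHom.commutes, Algebra.algebraMap_eq_smul_one]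
    exact Submodule.smul_mem _ r (one_mem_A_zero m n)
  · intro x y i hx hy cx cy
    rw [map_add]
    exact Submodule.add_mem _ cx cy
  · intro b hb i x hx cx
    rw [map_mul]
    have := mul_mem_A m n (Φ_mem_J m n hb) cx
    rwa [Nat.add_comm 1 i] at this

/-- The class of the empty word. -/
def δ1 (hn : 0 < n) : D m n := Finsupp.single ⟨([] : List (Fin m)), by simpa using hn⟩ 1

/-- The truncated Magnus expansion, as a linear map. -/
def μ (hn : 0 < n) : Rm m →ₗ[ℤ] D m n :=
  (LinearMap.applyₗ (δ1 m n hn)).comp (Φ m n).toLinearMap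

lemma μ_apply (hn : 0 < n) (a : Rm m) : μ m n hn a = Φ m n a (δ1 m n hn) := rfl

lemma Jn_le_ker (hn : 0 < n) : (J m) ^ n ≤ LinearMap.ker (μ m n hn) := by
  intro a ha
  rw [LinearMap.mem_ker, μ_apply]
  have h1 : Φ m n a (δ1 m n hn) ∈ Dge m n (0 + n) :=
    Φ_mem_A_n m n ha 0 _ (mem_Dge_zero m n _)
  rw [Nat.zero_add] at h1
  exact eq_zero_of_mem_Dge_n m n h1

/-- `x_i - 1`. -/
def e (i : Fin m) : Rm m := MonoidAlgebra.of ℤ (Γm m) (FreeGroup.of i) - 1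

/-- Product of `x_i - 1` over a word. -/
def P (l : List (Fin m)) : Rm m := (l.map (e m)).prod

lemma P_nil : P m [] = 1 := rfl

lemma P_cons (i : Fin m) (l : List (Fin m)) : P m (i :: l) = e m i * P m l := by
  simp [P]

lemma e_mem (i : Fin m) : e m i ∈ J m := by
  rw [mem_J, e, map_sub, aug_of, map_one, sub_self]

lemma P_mem (l : List (Fin m)) : P m l ∈ (J m) ^ l.length := by
  induction l with
  | nil => rw [P_nil, List.length_nil, pow_zero]; exact Submodule.one_le.mp le_rfl
  | cons i l ih =>
    rw [P_cons, List.length_cons, pow_succ']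
    exact Submodule.mul_mem_mul (e_mem m i) ih

lemma mul_left_mem (hn : 0 < n) (c : Rm m) {x : Rm m} (hx : x ∈ (J m) ^ n) :
    c * x ∈ (J m) ^ n := by
  obtain ⟨n', rfl⟩ : ∃ n', n = n' + 1 := ⟨n - 1, by omega⟩
  rw [pow_succ'] at hx ⊢
  refine Submodule.mul_induction_on hx (fun a ha b hb => ?_) (fun y z hy hz => ?_)
  · rw [← mul_assoc]
    refine Submodule.mul_mem_mul ?_ hb
    rw [mem_J, map_mul]
    rw [mem_J] at ha
    rw [ha, mul_zero]
  · rw [mul_add]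
    exact Submodule.add_mem _ hy hz

/-- Left multiplication by a group element on the quotient. -/
def L (hn : 0 < n) (g : Γm m) : (Rm m ⧸ (J m) ^ n) →ₗ[ℤ] (Rm m ⧸ (J m) ^ n) :=
  Submodule.mapQ _ _ (LinearMap.mulLeft ℤ (MonoidAlgebra.of ℤ (Γm m) g))
    (show _ ≤ Submodule.comap _ _ from fun x hx => mul_left_mem m n hn _ hx)

lemma L_mk (hn : 0 < n) (g : Γm m) (a : Rm m) :
    L m n hn g (Submodule.Quotient.mk a) =
      Submodule.Quotient.mk (MonoidAlgebra.of ℤ (Γm m) g * a) := by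
  rw [L, Submodule.mapQ_apply, LinearMap.mulLeft_apply]

lemma L_mul (hn : 0 < n) (g h : Γm m) (q : Rm m ⧸ (J m) ^ n) :
    L m n hn g (L m n hn h q) = L m n hn (g * h) q := by
  obtain ⟨a, rfl⟩ := Submodule.Quotient.mk_surjective _ q
  rw [L_mk, L_mk, L_mk, map_mul, mul_assoc]

lemma L_one (hn : 0 < n) (q : Rm m ⧸ (J m) ^ n) : L m n hn 1 q = q := by
  obtain ⟨a, rfl⟩ := Submodule.Quotient.mk_surjective _ q
  rw [L_mk, map_one, one_mul]

/-- The section sending a word to the class of the product of `x_i - 1`. -/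
def σ : D m n →ₗ[ℤ] (Rm m ⧸ (J m) ^ n) :=
  Finsupp.lift _ ℤ _ (fun w => Submodule.Quotient.mk (P m w.1))

lemma σ_single (w : Wlt m n) (c : ℤ) :
    σ m n (Finsupp.single w c) = c • Submodule.Quotient.mk (P m w.1) := by
  rw [σ, Finsupp.lift_apply, Finsupp.sum_single_index (by simp)]

lemma key (hn : 0 < n) (g : Γm m) (x : D m n) :
    σ m n ((gp m n g : Module.End ℤ (D m n)) x) = L m n hn g (σ m n x) := by
  induction g using FreeGroup.induction_on generalizing x with
  | C1 =>
    rw [map_one, Units.val_one, Module.End.one_apply, L_one]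
  | of i =>
    have hg : gp m n (FreeGroup.of i) = u m n i := FreeGroup.lift_apply_of
    rw [hg]
    show σ m n ((1 + N m n i : Module.End ℤ (D m n)) x) = _
    induction x using Finsupp.induction_linear with
    | zero => rw [map_zero, map_zero, map_zero]
    | add f g hf hg' => rw [map_add, map_add, map_add, hf, hg', ← map_add]
    | single w c =>
      rw [LinearMap.add_apply, Module.End.one_apply, map_add, σ_single, N_single,
        map_smul, L_mk]
      by_cases h : w.1.length + 1 < n
      · rw [dif_pos h, σ_single, ← smul_add, ← Submodule.Quotient.mk_add]
        congr 2
        show P m w.1 + P m (i :: w.1) =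
          MonoidAlgebra.of ℤ (Γm m) (FreeGroup.of i) * P m w.1
        rw [P_cons, e]
        noncomm_ring
      · rw [dif_neg h, map_zero, add_zero]
        have hq : (Submodule.Quotient.mk (P m w.1) : Rm m ⧸ (J m)^n) =
            Submodule.Quotient.mk (MonoidAlgebra.of ℤ (Γm m) (FreeGroup.of i) * P m w.1) := by
          rw [Submodule.Quotient.eq]
          have hmem : e m i * P m w.1 ∈ (J m) ^ n := by
            obtain ⟨n', hn'⟩ : ∃ n', n = n' + 1 := ⟨n - 1, by omega⟩
            have hlen : w.1.length = n' := by omega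
            subst hn'
            rw [pow_succ']
            refine Submodule.mul_mem_mul (e_mem m i) ?_
            have := P_mem m w.1
            rwa [hlen] at this
          have hneg := Submodule.neg_mem _ hmem
          have he2 : P m w.1 - MonoidAlgebra.of ℤ (Γm m) (FreeGroup.of i) * P m w.1 =
              -(e m i * P m w.1) := by
            rw [e]; noncomm_ring
          rwa [he2]
        show c • Submodule.Quotient.mk (P m w.1) = _
        rw [hq]
  | inv_of i ih =>
    rw [map_inv]
    set v := gp m n (FreeGroup.of i) with hv
    have hvv : (v : Module.End ℤ (D m n)) * ((v⁻¹ : _ˣ) : Module.End ℤ (D m n)) = 1 := by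
      rw [← Units.val_mul, mul_inv_cancel, Units.val_one]
    have h2 := ih (((v⁻¹ : _ˣ) : Module.End ℤ (D m n)) x)
    have h3 : (v : Module.End ℤ (D m n)) (((v⁻¹ : _ˣ) : Module.End ℤ (D m n)) x) = x := by
      rw [← Module.End.mul_apply, hvv, Module.End.one_apply]
    rw [h3] at h2
    rw [h2, L_mul, inv_mul_cancel, L_one]
  | mul a b iha ihb =>
    rw [map_mul, Units.val_mul, Module.End.mul_apply, iha, ihb, L_mul]

lemma σ_μ (hn : 0 < n) : (σ m n).comp (μ m n hn) = ((J m) ^ n).mkQ := by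
  refine MonoidAlgebra.lhom_ext' (fun g => ?_)
  apply LinearMap.ext_ring
  show σ m n (μ m n hn (MonoidAlgebra.single g 1)) = ((J m) ^ n).mkQ (MonoidAlgebra.single g 1)
  have h1 : (MonoidAlgebra.single g 1 : Rm m) = MonoidAlgebra.of ℤ (Γm m) g :=
    (MonoidAlgebra.of_apply ℤ (Γm m) g).symm
  rw [h1, μ_apply, Φ_of, key m n hn g, Submodule.mkQ_apply]
  have h2 : σ m n (δ1 m n hn) = Submodule.Quotient.mk 1 := by
    rw [δ1, σ_single, one_smul, P_nil]
  rw [h2, L_mk, mul_one]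

lemma ker_eq (hn : 0 < n) : LinearMap.ker (μ m n hn) = (J m) ^ n := by
  refine le_antisymm ?_ (Jn_le_ker m n hn)
  intro a ha
  rw [LinearMap.mem_ker] at ha
  have h1 : σ m n (μ m n hn a) = ((J m) ^ n).mkQ a := by rw [← LinearMap.comp_apply, σ_μ]
  rw [ha, map_zero] at h1
  rw [← Submodule.Quotient.mk_eq_zero, ← Submodule.mkQ_apply, ← h1]

lemma main (hn : 0 < n) :
    Module.Free ℤ (Rm m ⧸ ((J m) ^ n)) ∧ Module.Finite ℤ (Rm m ⧸ ((J m) ^ n)) := by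
  have equiv : (Rm m ⧸ ((J m) ^ n)) ≃ₗ[ℤ] LinearMap.range (μ m n hn) :=
    (Submodule.quotEquivOfEq _ _ (ker_eq m n hn).symm).trans
      (LinearMap.quotKerEquivRange (μ m n hn))
  haveI : Module.Finite ℤ (D m n) := inferInstance
  haveI : IsNoetherian ℤ (D m n) := isNoetherian_of_isNoetherianRing_of_finite ℤ (D m n)
  haveI hfin : Module.Finite ℤ (LinearMap.range (μ m n hn)) :=
    Module.Finite.iff_fg.mpr (IsNoetherian.noetherian _)
  haveI hfree : Module.Free ℤ (LinearMap.range (μ m n hn)) :=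
    Module.free_of_finite_type_torsion_free'
  exact ⟨Module.Free.of_equiv equiv.symm, Module.Finite.equiv equiv.symm⟩

end
end Stmt4Aux

/-- Let `Γ` be a finitely generated free group and `I` the augmentation ideal of `ℤ[Γ]`.
For every `n ≥ 1`, the quotient `ℤ[Γ]/Iⁿ` is a free `ℤ`-module of finite rank. -/
theorem stmt_4 (m : ℕ) (n : ℕ) (hn : 1 ≤ n)
    (I : Submodule ℤ (MonoidAlgebra ℤ (FreeGroup (Fin m))))
    (hI : I = Submodule.restrictScalars ℤ
      (RingHom.ker (MonoidAlgebra.lift ℤ ℤ (FreeGroup (Fin m)) 1 :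
        MonoidAlgebra ℤ (FreeGroup (Fin m)) →ₐ[ℤ] ℤ))) :
    Module.Free ℤ (MonoidAlgebra ℤ (FreeGroup (Fin m)) ⧸ (I ^ n)) ∧
    Module.Finite ℤ (MonoidAlgebra ℤ (FreeGroup (Fin m)) ⧸ (I ^ n)) := by
  have hIJ : I = Stmt4Aux.J m := hI
  subst hIJ
  exact Stmt4Aux.main m n hn
end
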